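/- arXiv:math/0410555 — 5 statements merged into one kernel-verified Lean document; each statement's English description precedes it below -/
import Mathlib

section
/- The multilinear part Lie_n of the free Lie ring on generators x_1,...,x_n (the span of Lie monomials containing each generator exactly once) is a free abelian group of rank (n-1)!. -/
open FreeLieAlgebra

/-- `IsLieMono a s` : `a` is a Lie monomial in the free Lie ring over ℤ on generators
`Fin n`, involving exactly the generators in `s`, each exactly once. -/
inductive IsLieMono {n : ℕ} : FreeLieAlgebra ℤ (Fin n) → Finset (Fin n) → Prop
  | of (i : Fin n) : IsLieMono (of ℤ i) {i}
  | bracket {a b : FreeLieAlgebra ℤ (Fin n)} {s t : Finset (Fin n)} :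
      IsLieMono a s → IsLieMono b t → Disjoint s t → IsLieMono ⁅a, b⁆ (s ∪ t)

/-- `LieN n` : the multilinear part of the free Lie ring on `n` generators, i.e. the
ℤ-span of the Lie monomials containing each generator exactly once. -/
noncomputable def LieN (n : ℕ) : Submodule ℤ (FreeLieAlgebra ℤ (Fin n)) :=
  Submodule.span ℤ {a | IsLieMono a Finset.univ}

/-!
Fix a generator `x_i`. The identity `⁅c, ⁅b₁, b₂⁆⁆ = ⁅⁅c, b₁⁆, b₂⁆ - ⁅⁅c, b₂⁆, b₁⁆` shows, by
induction on Lie monomials, that every multilinear monomial is an integral combination of the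
left-normed brackets `⁅⋯⁅⁅x_i, x_{j₁}⁆, x_{j₂}⁆, ⋯, x_{j_{n-1}}⁆`, one for each of the `(n-1)!`
orderings `j` of the other generators. These are linearly independent: in the free associative
ring such a bracket is the word `x_i x_{j₁} ⋯ x_{j_{n-1}}` plus words not beginning with `x_i`.
-/

namespace Finset

variable {α : Type*} [DecidableEq α]

noncomputable def enumerations (s : Finset α) : Finset (List α) :=
  s.toList.permutations.toFinset

lemma mem_enumerations {s : Finset α} {l : List α} :
    l ∈ s.enumerations ↔ l.Nodup ∧ l.toFinset = s := by
  rw [enumerations, List.mem_toFinset, List.mem_permutations]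
  refine ⟨fun h => ⟨h.nodup_iff.2 s.nodup_toList, by ext; simp [h.mem_iff]⟩, ?_⟩
  rintro ⟨hl, rfl⟩
  exact (List.perm_ext_iff_of_nodup hl (nodup_toList _)).2 (by simp)

lemma card_enumerations (s : Finset α) : s.enumerations.card = s.card.factorial := by
  rw [enumerations, List.toFinset_card_of_nodup (List.nodup_permutations _ s.nodup_toList),
    List.length_permutations, length_toList]

lemma append_mem_enumerations_union {s t : Finset α} {l₁ l₂ : List α} (hst : Disjoint s t)
    (h₁ : l₁ ∈ s.enumerations) (h₂ : l₂ ∈ t.enumerations) :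
    l₁ ++ l₂ ∈ (s ∪ t).enumerations := by
  rw [mem_enumerations] at *
  refine ⟨h₁.1.append h₂.1 ?_, by rw [List.toFinset_append, h₁.2, h₂.2]⟩
  rwa [← List.disjoint_toFinset_iff_disjoint, h₁.2, h₂.2]

lemma notMem_of_mem_enumerations_erase {s : Finset α} {i : α} {l : List α}
    (hl : l ∈ (s.erase i).enumerations) : i ∉ l := by
  simpa using congrArg (i ∈ ·) (mem_enumerations.1 hl).2

end Finset

section LeftNormed

variable {R L ι : Type*} [CommRing R] [LieRing L] [LieAlgebra R L] (x : ι → L)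

def leftNormed (c : L) (l : List ι) : L :=
  l.foldl (fun y i => ⁅y, x i⁆) c

@[simp]
lemma leftNormed_nil (c : L) : leftNormed x c [] = c := rfl

lemma leftNormed_append (c : L) (l₁ l₂ : List ι) :
    leftNormed x c (l₁ ++ l₂) = leftNormed x (leftNormed x c l₁) l₂ :=
  List.foldl_append

lemma leftNormed_concat (c : L) (l : List ι) (j : ι) :
    leftNormed x c (l ++ [j]) = ⁅leftNormed x c l, x j⁆ :=
  leftNormed_append x c l [j]

variable (R) [DecidableEq ι]

def leftNormedSpan (c : L) (t : Finset ι) : Submodule R L :=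
  Submodule.span R (Set.range fun l : t.enumerations => leftNormed x c l)

variable {R x}

lemma leftNormed_mem_leftNormedSpan {c : L} {t : Finset ι} {l : List ι}
    (hl : l ∈ t.enumerations) : leftNormed x c l ∈ leftNormedSpan R x c t :=
  Submodule.subset_span ⟨⟨l, hl⟩, rfl⟩

lemma lie_mem_leftNormedSpan_union {c b y : L} {s t : Finset ι} (hst : Disjoint s t)
    (hb : ∀ c', ⁅c', b⁆ ∈ leftNormedSpan R x c' t) (hy : y ∈ leftNormedSpan R x c s) :
    ⁅y, b⁆ ∈ leftNormedSpan R x c (s ∪ t) := by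
  induction hy using Submodule.span_induction with
  | mem y hy =>
    obtain ⟨⟨l₁, hl₁⟩, rfl⟩ := hy
    refine Submodule.span_le.2 ?_ (hb (leftNormed x c l₁))
    rintro _ ⟨⟨l₂, hl₂⟩, rfl⟩
    have h := leftNormed_mem_leftNormedSpan (R := R) (x := x) (c := c)
      (Finset.append_mem_enumerations_union hst hl₁ hl₂)
    rwa [leftNormed_append] at h
  | zero => simp
  | add y z _ _ hy hz => rw [add_lie]; exact add_mem hy hz
  | smul r y _ hy => rw [smul_lie]; exact Submodule.smul_mem _ r hy

end LeftNormed

namespace IsLieMono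

variable {n : ℕ} {a b : FreeLieAlgebra ℤ (Fin n)} {s t : Finset (Fin n)}

theorem lie_mem_leftNormedSpan (hb : IsLieMono b t) (c : FreeLieAlgebra ℤ (Fin n)) :
    ⁅c, b⁆ ∈ leftNormedSpan ℤ (FreeLieAlgebra.of ℤ) c t := by
  induction hb generalizing c with
  | of i => exact leftNormed_mem_leftNormedSpan (l := [i]) (by simp [Finset.mem_enumerations])
  | @bracket b₁ b₂ t₁ t₂ _ _ ht ih₁ ih₂ =>
    have jacobi : ⁅c, ⁅b₁, b₂⁆⁆ = ⁅⁅c, b₁⁆, b₂⁆ - ⁅⁅c, b₂⁆, b₁⁆ := by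
      rw [leibniz_lie, sub_eq_add_neg, lie_skew]
    rw [jacobi]
    refine sub_mem (lie_mem_leftNormedSpan_union ht ih₂ (ih₁ c)) ?_
    rw [Finset.union_comm]
    exact lie_mem_leftNormedSpan_union ht.symm ih₁ (ih₂ c)

theorem mem_leftNormedSpan_erase (ha : IsLieMono a s) {i : Fin n} (hi : i ∈ s) :
    a ∈ leftNormedSpan ℤ (FreeLieAlgebra.of ℤ) (FreeLieAlgebra.of ℤ i) (s.erase i) := by
  induction ha with
  | of j =>
    obtain rfl := Finset.mem_singleton.1 hi
    exact leftNormed_mem_leftNormedSpan (l := []) (by simp [Finset.mem_enumerations])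
  | @bracket a b s t ha hb hst ih₁ ih₂ =>
    rcases Finset.mem_union.1 hi with hs | ht
    · rw [Finset.erase_union_distrib, Finset.erase_eq_of_notMem (Finset.disjoint_left.1 hst hs)]
      exact lie_mem_leftNormedSpan_union (hst.mono_left (Finset.erase_subset _ _))
        hb.lie_mem_leftNormedSpan (ih₁ hs)
    · rw [Finset.erase_union_distrib, Finset.erase_eq_of_notMem (Finset.disjoint_right.1 hst ht),
        Finset.union_comm, ← lie_skew]
      exact neg_mem <| lie_mem_leftNormedSpan_union (hst.symm.mono_left (Finset.erase_subset _ _))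
        ha.lie_mem_leftNormedSpan (ih₂ ht)

end IsLieMono

theorem isLieMono_leftNormed {n : ℕ} {i : Fin n} {l : List (Fin n)} (hl : (i :: l).Nodup) :
    IsLieMono (leftNormed (of ℤ) (of ℤ i) l) (insert i l.toFinset) := by
  induction l using List.reverseRecOn with
  | nil => simpa using IsLieMono.of i
  | append_singleton l j ih =>
    obtain ⟨hj, hl⟩ := (List.nodup_concat (i :: l) j).1 (by simpa using hl)
    have hdisj : Disjoint (insert i l.toFinset) {j} := by simpa using hj
    have hset : insert i l.toFinset ∪ {j} = insert i (l ++ [j]).toFinset := by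
      rw [List.toFinset_append, Finset.insert_union]; rfl
    rw [leftNormed_concat, ← hset]
    exact (ih hl).bracket (.of j) hdisj

theorem LieN.eq_leftNormedSpan {n : ℕ} (i : Fin n) :
    LieN n = leftNormedSpan ℤ (of ℤ) (of ℤ i) (Finset.univ.erase i) := by
  refine le_antisymm (Submodule.span_le.2 fun a ha => ?_) (Submodule.span_le.2 ?_)
  · simpa using IsLieMono.mem_leftNormedSpan_erase ha (Finset.mem_univ i)
  · rintro _ ⟨⟨l, hl⟩, rfl⟩
    have hi := Finset.notMem_of_mem_enumerations_erase hl
    obtain ⟨hnd, hl⟩ := Finset.mem_enumerations.1 hl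
    refine Submodule.subset_span (?_ : IsLieMono _ _)
    simpa [hl] using isLieMono_leftNormed (List.nodup_cons.2 ⟨hi, hnd⟩)

def FreeMonoid.wordsWithHeadNe {α : Type*} (i : α) : Set (FreeMonoid α) :=
  {w | ∃ j ≠ i, ∃ v, w = FreeMonoid.of j * v}

lemma FreeMonoid.of_mul_notMem_wordsWithHeadNe {α : Type*} (i : α) (v : FreeMonoid α) :
    FreeMonoid.of i * v ∉ wordsWithHeadNe i := by
  rintro ⟨j, hj, v', h⟩
  have : i = j ∧ v.toList = v'.toList := by simpa using congrArg FreeMonoid.toList h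
  exact hj this.1.symm

section FreeMonoidAlgebra

open MonoidAlgebra (single supported)
open FreeMonoid (ofList wordsWithHeadNe)

variable {R α : Type*} [CommRing R]

attribute [local instance] LieRing.ofAssociativeRing

variable (R) in
noncomputable def FreeLieAlgebra.toFreeMonoidAlgebra :
    FreeLieAlgebra R α →ₗ⁅R⁆ MonoidAlgebra R (FreeMonoid α) :=
  lift R fun i => single (FreeMonoid.of i) 1

open FreeLieAlgebra (toFreeMonoidAlgebra)

@[simp]
lemma FreeLieAlgebra.toFreeMonoidAlgebra_of (i : α) :
    toFreeMonoidAlgebra R (of R i) = single (FreeMonoid.of i) 1 :=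
  lift_of_apply _ _

lemma mul_single_of_mem_supported_wordsWithHeadNe {i : α} {y : MonoidAlgebra R (FreeMonoid α)}
    (hy : y ∈ supported R R (wordsWithHeadNe i)) (j : α) :
    y * single (FreeMonoid.of j) 1 ∈ supported R R (wordsWithHeadNe i) := by
  classical
  intro w hw
  obtain ⟨u, hu, rfl⟩ :=
    Finset.mem_image.1 (MonoidAlgebra.support_coeff_mul_single_subset y 1 _ hw)
  obtain ⟨k, hk, v, rfl⟩ := hy hu
  exact ⟨k, hk, v * FreeMonoid.of j, mul_assoc _ _ _⟩

lemma single_of_mul_mem_supported_wordsWithHeadNe {i j : α} (hj : j ≠ i)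
    (y : MonoidAlgebra R (FreeMonoid α)) :
    single (FreeMonoid.of j) 1 * y ∈ supported R R (wordsWithHeadNe i) := by
  classical
  intro w hw
  obtain ⟨u, -, rfl⟩ :=
    Finset.mem_image.1 (MonoidAlgebra.support_coeff_single_mul_subset y 1 _ hw)
  exact ⟨j, hj, u, rfl⟩

lemma toFreeMonoidAlgebra_leftNormed_sub_single_mem {i : α} {l : List α} (hi : i ∉ l) :
    toFreeMonoidAlgebra R (leftNormed (of R) (of R i) l)
      - single (FreeMonoid.of i * ofList l) 1 ∈ supported R R (wordsWithHeadNe i) := by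
  induction l using List.reverseRecOn with
  | nil => simp
  | append_singleton l j ih =>
    have hj : j ≠ i := fun h => hi (by simp [h])
    set u := toFreeMonoidAlgebra R (leftNormed (of R) (of R i) l)
    set sj : MonoidAlgebra R (FreeMonoid α) := single (FreeMonoid.of j) 1
    have hlie : toFreeMonoidAlgebra R (leftNormed (of R) (of R i) (l ++ [j]))
        = u * sj - sj * u := by
      rw [leftNormed_concat, LieHom.map_lie, FreeLieAlgebra.toFreeMonoidAlgebra_of, Ring.lie_def]
    have hword : (single (FreeMonoid.of i * ofList (l ++ [j])) 1 : MonoidAlgebra R _)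
        = single (FreeMonoid.of i * ofList l) 1 * sj := by
      rw [MonoidAlgebra.single_mul_single, one_mul, FreeMonoid.ofList_append,
        FreeMonoid.ofList_singleton, mul_assoc]
    rw [hlie, hword, sub_right_comm, ← sub_mul]
    exact sub_mem (mul_single_of_mem_supported_wordsWithHeadNe (ih fun h => hi (List.mem_append_left _ h)) j)
      (single_of_mul_mem_supported_wordsWithHeadNe hj u)

lemma coeff_toFreeMonoidAlgebra_leftNormed [DecidableEq α] {i : α} {l : List α} (hi : i ∉ l)
    (l' : List α) :
    (toFreeMonoidAlgebra R (leftNormed (of R) (of R i) l)).coeff (FreeMonoid.of i * ofList l')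
      = if l = l' then 1 else 0 := by
  have h := MonoidAlgebra.mem_supported'.1 (toFreeMonoidAlgebra_leftNormed_sub_single_mem (R := R) hi) _
    (FreeMonoid.of_mul_notMem_wordsWithHeadNe i (ofList l'))
  rw [MonoidAlgebra.coeff_sub, Finsupp.sub_apply, sub_eq_zero] at h
  rw [h, MonoidAlgebra.coeff_single]
  by_cases hl : l = l'
  · simp [hl]
  · rw [if_neg hl, Finsupp.single_eq_of_ne]
    simpa using Ne.symm hl

theorem linearIndependent_leftNormed {i : α} {S : Set (List α)} (hS : ∀ l ∈ S, i ∉ l) :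
    LinearIndependent R fun l : S => leftNormed (of R) (of R i) (l : List α) := by
  classical
  refine linearIndependent_iff'.2 fun s g hg l hl => ?_
  have h := congrArg (fun y => (toFreeMonoidAlgebra R y).coeff (FreeMonoid.of i * ofList l)) hg
  simpa [coeff_toFreeMonoidAlgebra_leftNormed (hS _ (Subtype.prop _)), Subtype.coe_inj, hl]
    using h

end FreeMonoidAlgebra

noncomputable def LieN.basisLeftNormed {n : ℕ} (i : Fin n) :
    Module.Basis (Finset.univ.erase i).enumerations ℤ (LieN n) :=
  have hi : ∀ l ∈ (Finset.univ.erase i).enumerations, i ∉ l :=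
    fun _ => Finset.notMem_of_mem_enumerations_erase
  (Module.Basis.span (linearIndependent_leftNormed hi)).map
    (LinearEquiv.ofEq _ _ (LieN.eq_leftNormedSpan i).symm)

/-- the multilinear part `Lie_n` of the free Lie ring on `n` generators is
a free abelian group of rank `(n-1)!`. -/
theorem lieN_free_of_rank_factorial (n : ℕ) (hn : 1 ≤ n) :
    Nonempty (Module.Basis (Fin (Nat.factorial (n - 1))) ℤ (LieN n)) := by
  let i : Fin n := ⟨0, hn⟩
  have hcard : Fintype.card (Finset.univ.erase i).enumerations = (n - 1).factorial := by
    rw [Fintype.card_coe, Finset.card_enumerations, Finset.card_erase_of_mem (Finset.mem_univ i),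
      Finset.card_univ, Fintype.card_fin]
  exact ⟨(LieN.basisLeftNormed i).reindex (Fintype.equivFinOfCardEq hcard)⟩
end

section
/- The left-regulated Lie brackets λ_σ = [x_{σ(1)},[x_{σ(2)},[...,[x_{σ(n-1)},x_n]...]]], for σ ranging over the permutations of {1,...,n-1}, form a ℤ-basis of the multilinear part Lie_n of the free Lie ring on x_1,...,x_n. -/
open FreeLieAlgebra

/-- The left-regulated (left-normed) Lie bracket
`λ_σ = [x_{σ(1)}, [x_{σ(2)}, [ ... [x_{σ(n-1)}, x_n] ... ]]]`, where the generators are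
`x_1, ..., x_n` (indexed here by `Fin (n+1)` with `x_n` the last one) and `σ` is a
permutation of the first `n - 1` generators. -/
noncomputable def lam (n : ℕ) (σ : Equiv.Perm (Fin n)) : FreeLieAlgebra ℤ (Fin (n + 1)) :=
  (List.ofFn fun i : Fin n => of ℤ (Fin.castSucc (σ i))).foldr
    (fun a acc => ⁅a, acc⁆) (of ℤ (Fin.last n))

namespace LamAux
variable {n : ℕ}

noncomputable def E (l : List (Fin (n+1))) : FreeLieAlgebra ℤ (Fin (n+1)) :=
  (l.map (of ℤ)).foldr (fun a acc => ⁅a, acc⁆) (of ℤ (Fin.last n))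

@[simp] lemma E_nil : E ([] : List (Fin (n+1))) = of ℤ (Fin.last n) := rfl
@[simp] lemma E_cons (a : Fin (n+1)) (l : List (Fin (n+1))) : E (a :: l) = ⁅of ℤ a, E l⁆ := rfl

lemma mono_E (l : List (Fin (n+1))) (hd : l.Nodup) (hl : Fin.last n ∉ l) :
    IsLieMono (E l) (insert (Fin.last n) l.toFinset) := by
  induction l with
  | nil => simpa using IsLieMono.of (Fin.last n)
  | cons a l ih =>
    simp only [List.nodup_cons] at hd
    simp only [List.mem_cons, not_or] at hl
    have h := IsLieMono.bracket (IsLieMono.of a) (ih hd.2 hl.2) (by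
      simp only [Finset.disjoint_singleton_left, Finset.mem_insert, List.mem_toFinset]
      tauto)
    rw [E_cons]
    convert h using 1
    ext x
    simp [List.toFinset_cons]
    try tauto

/-- the span of left-normed monomials ending in `last n` with support `s` -/
noncomputable def Sp (s : Finset (Fin (n+1))) : Submodule ℤ (FreeLieAlgebra ℤ (Fin (n+1))) :=
  Submodule.span ℤ {a | ∃ l : List (Fin (n+1)), l.Nodup ∧ Fin.last n ∉ l ∧ l.toFinset = s ∧ a = E l}

lemma lie_mem_of_forall {u : FreeLieAlgebra ℤ (Fin (n+1))} {X : Set (FreeLieAlgebra ℤ (Fin (n+1)))}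
    {p : Submodule ℤ (FreeLieAlgebra ℤ (Fin (n+1)))}
    (h : ∀ x ∈ X, ⁅u, x⁆ ∈ p) {y} (hy : y ∈ Submodule.span ℤ X) : ⁅u, y⁆ ∈ p := by
  induction hy using Submodule.span_induction with
  | mem x hx => exact h x hx
  | zero => simpa using p.zero_mem
  | add x y _ _ hx hy => rw [lie_add]; exact p.add_mem hx hy
  | smul c x _ hx => rw [lie_smul]; exact p.smul_mem c hx

lemma lemmaA {a : FreeLieAlgebra ℤ (Fin (n+1))} {s : Finset (Fin (n+1))}
    (h : IsLieMono a s) (hs : Fin.last n ∉ s) :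
    ∀ l : List (Fin (n+1)), l.Nodup → Fin.last n ∉ l → Disjoint s l.toFinset →
      ⁅a, E l⁆ ∈ Sp (s ∪ l.toFinset) := by
  induction h with
  | of i =>
    intro l hnd hll hdisj
    apply Submodule.subset_span
    refine ⟨i :: l, ?_, ?_, by rw [List.toFinset_cons, Finset.insert_eq], rfl⟩
    · simp only [List.nodup_cons, hnd, and_true]
      intro hi
      exact (Finset.disjoint_left.mp hdisj (Finset.mem_singleton_self i)) (List.mem_toFinset.mpr hi)
    · simp only [List.mem_cons, not_or]
      exact ⟨fun h => hs (by simp [← h]), hll⟩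
  | @bracket u v su sv hu hv hdisj ihu ihv =>
    intro l hnd hll hdisjl
    rw [lie_lie]
    have hsu : Fin.last n ∉ su := fun h => hs (Finset.mem_union_left _ h)
    have hsv : Fin.last n ∉ sv := fun h => hs (Finset.mem_union_right _ h)
    have hdu : Disjoint su l.toFinset := hdisjl.mono_left Finset.subset_union_left
    have hdv : Disjoint sv l.toFinset := hdisjl.mono_left Finset.subset_union_right
    refine Submodule.sub_mem _ ?_ ?_
    · -- ⁅u, ⁅v, E l⁆⁆
      have h1 := ihv hsv l hnd hll hdv
      refine lie_mem_of_forall ?_ h1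
      rintro x ⟨l', hnd', hll', hfs', rfl⟩
      have := ihu hsu l' hnd' hll' (by rw [hfs']; exact Finset.disjoint_union_right.mpr ⟨hdisj, hdu⟩)
      rw [hfs'] at this
      convert this using 2
      ext x; simp [Finset.mem_union]; try tauto
    · have h1 := ihu hsu l hnd hll hdu
      refine lie_mem_of_forall ?_ h1
      rintro x ⟨l', hnd', hll', hfs', rfl⟩
      have := ihv hsv l' hnd' hll' (by rw [hfs']; exact Finset.disjoint_union_right.mpr ⟨hdisj.symm, hdv⟩)
      rw [hfs'] at this
      convert this using 2
      ext x; simp [Finset.mem_union]; try tauto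

lemma lemmaB {a : FreeLieAlgebra ℤ (Fin (n+1))} {s : Finset (Fin (n+1))}
    (h : IsLieMono a s) (hs : Fin.last n ∈ s) : a ∈ Sp (s.erase (Fin.last n)) := by
  induction h with
  | of i =>
    have : Fin.last n = i := by simpa using hs
    subst this
    apply Submodule.subset_span
    exact ⟨[], by simp, by simp, by simp, rfl⟩
  | @bracket u v su sv hu hv hdisj ihu ihv =>
    rcases Finset.mem_union.mp hs with h1 | h1
    · -- last ∈ su : ⁅u,v⁆ = -⁅v,u⁆
      have hsv : Fin.last n ∉ sv := fun hc => Finset.disjoint_left.mp hdisj h1 hc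
      have hu' := ihu h1
      rw [← lie_skew]
      refine Submodule.neg_mem _ ?_
      refine lie_mem_of_forall ?_ hu'
      rintro x ⟨l', hnd', hll', hfs', rfl⟩
      have := lemmaA hv hsv l' hnd' hll' (by
        rw [hfs']
        exact Finset.disjoint_of_subset_right (Finset.erase_subset _ _) hdisj.symm)
      rw [hfs'] at this
      convert this using 2
      ext x
      simp only [Finset.mem_union, Finset.mem_erase]
      constructor
      · rintro ⟨hxl, hx | hx⟩
        · exact Or.inr ⟨hxl, hx⟩
        · exact Or.inl hx
      · rintro (hx | ⟨hxl, hx⟩)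
        · exact ⟨fun h => hsv (h ▸ hx), Or.inr hx⟩
        · exact ⟨hxl, Or.inl hx⟩
    · have hsu : Fin.last n ∉ su := fun hc => Finset.disjoint_left.mp hdisj hc h1
      have hv' := ihv h1
      refine lie_mem_of_forall ?_ hv'
      rintro x ⟨l', hnd', hll', hfs', rfl⟩
      have := lemmaA hu hsu l' hnd' hll' (by
        rw [hfs']
        exact Finset.disjoint_of_subset_right (Finset.erase_subset _ _) hdisj)
      rw [hfs'] at this
      convert this using 2
      ext x
      simp only [Finset.mem_union, Finset.mem_erase]
      constructor
      · rintro ⟨hxl, hx | hx⟩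
        · exact Or.inl hx
        · exact Or.inr ⟨hxl, hx⟩
      · rintro (hx | ⟨hxl, hx⟩)
        · exact ⟨fun h => hsu (h ▸ hx), Or.inl hx⟩
        · exact ⟨hxl, Or.inr hx⟩

lemma lam_eq_E (σ : Equiv.Perm (Fin n)) :
    lam n σ = E (List.ofFn fun i => Fin.castSucc (σ i)) := by
  unfold lam E
  rw [List.map_ofFn]
  rfl

lemma castSucc_ne_last (j : Fin n) : Fin.castSucc j ≠ Fin.last n :=
  (Fin.castSucc_lt_last j).ne

lemma lam_mem_lieN (σ : Equiv.Perm (Fin n)) : lam n σ ∈ LieN (n+1) := by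
  rw [lam_eq_E]
  apply Submodule.subset_span
  show IsLieMono _ _
  have h := mono_E (List.ofFn fun i => Fin.castSucc (σ i))
    (List.nodup_ofFn.mpr ((Fin.castSucc_injective n).comp σ.injective))
    (by
      simp only [List.mem_ofFn]
      rintro ⟨j, hj⟩
      exact castSucc_ne_last _ hj)
  convert h using 1
  ext x
  simp only [Finset.mem_univ, Finset.mem_insert, List.mem_toFinset, List.mem_ofFn, true_iff]
  rcases Fin.eq_castSucc_or_eq_last x with ⟨j, rfl⟩ | h
  · exact Or.inr ⟨σ.symm j, by simp⟩
  · exact Or.inl h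

lemma E_mem_range_lam (l : List (Fin (n+1))) (hnd : l.Nodup) (hll : Fin.last n ∉ l)
    (hfs : l.toFinset = Finset.univ.erase (Fin.last n)) :
    E l ∈ Set.range (lam n) := by
  have hlen : l.length = n := by
    have h1 : l.toFinset.card = l.length := List.toFinset_card_of_nodup hnd
    have h2 : (Finset.univ.erase (Fin.last n)).card = n := by
      rw [Finset.card_erase_of_mem (Finset.mem_univ _)]
      simp
    rw [← h1, hfs, h2]
  have hne : ∀ i : Fin n, l.get (Fin.cast hlen.symm i) ≠ Fin.last n := by
    intro i h
    exact hll (h ▸ l.get_mem _)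
  set f : Fin n → Fin n := fun i => (l.get (Fin.cast hlen.symm i)).castPred (hne i) with hf
  have hinj : Function.Injective f := by
    intro i j hij
    have := congrArg Fin.castSucc hij
    rw [hf] at this
    simp only [Fin.castSucc_castPred] at this
    have := List.nodup_iff_injective_get.mp hnd this
    exact Fin.cast_injective _ this
  let σ : Equiv.Perm (Fin n) := Equiv.ofBijective f (Finite.injective_iff_bijective.mp hinj)
  refine ⟨σ, ?_⟩
  rw [lam_eq_E]
  congr 1
  apply List.ext_get (by simp [hlen])
  intro i h1 h2
  simp only [List.get_ofFn]
  show Fin.castSucc (f _) = _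
  rw [hf]
  simp [Fin.castSucc_castPred]

lemma span_eq : Submodule.span ℤ (Set.range (lam n)) = LieN (n + 1) := by
  apply le_antisymm
  · rw [Submodule.span_le]
    rintro x ⟨σ, rfl⟩
    exact lam_mem_lieN σ
  · rw [LieN, Submodule.span_le]
    intro a ha
    have h1 : a ∈ Sp (Finset.univ.erase (Fin.last n)) := lemmaB ha (Finset.mem_univ _)
    have h2 : Sp (Finset.univ.erase (Fin.last n)) ≤ Submodule.span ℤ (Set.range (lam n)) := by
      rw [Sp, Submodule.span_le]
      rintro x ⟨l, hnd, hll, hfs, rfl⟩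
      exact Submodule.subset_span (E_mem_range_lam l hnd hll hfs)
    exact h2 h1


section
variable {n : ℕ}

noncomputable def eA : FreeAlgebra ℤ (Fin (n+1)) ≃ₐ[ℤ] MonoidAlgebra ℤ (FreeMonoid (Fin (n+1))) :=
  FreeAlgebra.equivMonoidAlgebraFreeMonoid

noncomputable def B : Module.Basis (FreeMonoid (Fin (n+1))) ℤ (FreeAlgebra ℤ (Fin (n+1))) :=
  FreeAlgebra.basisFreeMonoid ℤ (Fin (n+1))

lemma eA_prod (l : List (Fin (n+1))) :
    eA ((l.map (FreeAlgebra.ι ℤ)).prod) = MonoidAlgebra.single (FreeMonoid.ofList l) 1 := by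
  induction l with
  | nil =>
    simp only [List.map_nil, List.prod_nil, map_one]
    rfl
  | cons a l ih =>
    rw [List.map_cons, List.prod_cons, map_mul, ih]
    have h1 : eA (FreeAlgebra.ι ℤ a) = MonoidAlgebra.single (FreeMonoid.of a) 1 := by
      rw [eA, FreeAlgebra.equivMonoidAlgebraFreeMonoid]
      simp [FreeAlgebra.lift_ι_apply]
    rw [h1, MonoidAlgebra.single_mul_single, one_mul]
    rfl

lemma B_ofList (l : List (Fin (n+1))) :
    B (FreeMonoid.ofList l) = (l.map (FreeAlgebra.ι ℤ)).prod := by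
  apply eA.injective
  rw [eA_prod]
  rw [B, FreeAlgebra.basisFreeMonoid]
  erw [Module.Basis.map_apply]
  simp [eA, Finsupp.coe_basisSingleOne, LinearEquiv.trans_symm]
end
attribute [local instance] LieRing.ofAssociativeRing
section
variable {n : ℕ}

noncomputable def phi : FreeLieAlgebra ℤ (Fin (n+1)) →ₗ⁅ℤ⁆ FreeAlgebra ℤ (Fin (n+1)) :=
  FreeLieAlgebra.lift ℤ (FreeAlgebra.ι ℤ)

/-- words not ending in `last n` (including the empty word) -/
def A : Set (FreeMonoid (Fin (n+1))) := {w | w.toList.getLast? ≠ some (Fin.last n)}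

noncomputable def S : Submodule ℤ (FreeAlgebra ℤ (Fin (n+1))) := Submodule.span ℤ (B '' A)

lemma B_concat (w : FreeMonoid (Fin (n+1))) (a : Fin (n+1)) :
    B w * FreeAlgebra.ι ℤ a = B (FreeMonoid.ofList (w.toList ++ [a])) := by
  conv_lhs => rw [← FreeMonoid.ofList_toList w]
  rw [B_ofList, B_ofList, List.map_append, List.prod_append, List.map_singleton,
    List.prod_singleton]

lemma B_cons (w : FreeMonoid (Fin (n+1))) (a : Fin (n+1)) :
    FreeAlgebra.ι ℤ a * B w = B (FreeMonoid.ofList (a :: w.toList)) := by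
  conv_lhs => rw [← FreeMonoid.ofList_toList w]
  rw [B_ofList, B_ofList, List.map_cons, List.prod_cons]

lemma mulS {a : Fin (n+1)} (ha : a ≠ Fin.last n) (x : FreeAlgebra ℤ (Fin (n+1))) :
    x * FreeAlgebra.ι ℤ a ∈ S := by
  have hx : x ∈ Submodule.span ℤ (Set.range (B (n := n))) := by
    rw [B.span_eq]; trivial
  have hle : Submodule.span ℤ (Set.range (B (n := n))) ≤
      S.comap (LinearMap.mulRight ℤ (FreeAlgebra.ι ℤ a)) := by
    rw [Submodule.span_le]
    rintro y ⟨w, rfl⟩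
    simp only [SetLike.mem_coe, Submodule.mem_comap, LinearMap.mulRight_apply]
    rw [B_concat]
    apply Submodule.subset_span
    refine ⟨_, ?_, rfl⟩
    show (FreeMonoid.ofList (w.toList ++ [a])).toList.getLast? ≠ _
    rw [FreeMonoid.toList_ofList, List.getLast?_concat]
    simpa using ha
  exact hle hx

lemma mulL {a : Fin (n+1)} (ha : a ≠ Fin.last n) {x : FreeAlgebra ℤ (Fin (n+1))} (hx : x ∈ S) :
    FreeAlgebra.ι ℤ a * x ∈ S := by
  induction hx using Submodule.span_induction with
  | mem y hy =>
    obtain ⟨w, hw, rfl⟩ := hy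
    rw [B_cons]
    apply Submodule.subset_span
    refine ⟨_, ?_, rfl⟩
    show (FreeMonoid.ofList (a :: w.toList)).toList.getLast? ≠ _
    rw [FreeMonoid.toList_ofList]
    have hw' : w.toList.getLast? ≠ some (Fin.last n) := hw
    rcases h : w.toList with _ | ⟨b, t⟩
    · simpa using ha
    · rw [List.getLast?_cons_cons]
      rw [h] at hw'
      exact hw'
  | zero => simpa using S.zero_mem
  | add y z _ _ hy hz => rw [mul_add]; exact S.add_mem hy hz
  | smul c y _ hy => rw [mul_smul_comm]; exact S.smul_mem c hy
end

section
variable {n : ℕ}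

@[simp] lemma phi_of (i : Fin (n+1)) : phi (of ℤ i) = FreeAlgebra.ι ℤ i := lift_of_apply ..

lemma expansion : ∀ l : List (Fin (n+1)), (∀ a ∈ l, a ≠ Fin.last n) →
    phi (E l) - B (FreeMonoid.ofList (l ++ [Fin.last n])) ∈ S := by
  intro l
  induction l with
  | nil =>
    intro _
    rw [E_nil, phi_of, List.nil_append, B_ofList]
    simp
  | cons a l ih =>
    intro hmem
    have ha : a ≠ Fin.last n := hmem a List.mem_cons_self
    have hd := ih fun b hb => hmem b (List.mem_cons_of_mem a hb)
    set y := phi (E l) with hy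
    set w := B (FreeMonoid.ofList (l ++ [Fin.last n])) with hw
    have h1 : phi (E (a :: l)) = FreeAlgebra.ι ℤ a * y - y * FreeAlgebra.ι ℤ a := by
      rw [E_cons, LieHom.map_lie, phi_of, Ring.lie_def, hy]
    have h2 : B (FreeMonoid.ofList ((a :: l) ++ [Fin.last n])) = FreeAlgebra.ι ℤ a * w := by
      rw [hw, B_cons, FreeMonoid.toList_ofList]
      rfl
    rw [h1, h2]
    have h3 : FreeAlgebra.ι ℤ a * y - y * FreeAlgebra.ι ℤ a - FreeAlgebra.ι ℤ a * w
        = FreeAlgebra.ι ℤ a * (y - w) - y * FreeAlgebra.ι ℤ a := by noncomm_ring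
    rw [h3]
    exact Submodule.sub_mem _ (mulL ha hd) (mulS ha y)

noncomputable def wperm (σ : Equiv.Perm (Fin n)) : FreeMonoid (Fin (n+1)) :=
  FreeMonoid.ofList ((List.ofFn fun i => Fin.castSucc (σ i)) ++ [Fin.last n])

lemma wperm_getLast (σ : Equiv.Perm (Fin n)) :
    (wperm σ).toList.getLast? = some (Fin.last n) := by
  rw [wperm, FreeMonoid.toList_ofList, List.getLast?_concat]

lemma coord_S {σ : Equiv.Perm (Fin n)} {x} (hx : x ∈ S) : B.coord (wperm σ) x = 0 := by
  have hle : S ≤ LinearMap.ker (B.coord (wperm σ)) := by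
    rw [S, Submodule.span_le]
    rintro _ ⟨w, hw, rfl⟩
    simp only [SetLike.mem_coe, LinearMap.mem_ker, Module.Basis.coord_apply, Module.Basis.repr_self]
    classical
    rw [Finsupp.single_apply, if_neg fun h => hw (by rw [h]; exact wperm_getLast σ)]
  exact hle hx

lemma wperm_inj : Function.Injective (wperm (n := n)) := by
  intro τ σ h
  rw [wperm, wperm] at h
  have h2 : (List.ofFn fun i => Fin.castSucc (τ i)) ++ [Fin.last n]
      = (List.ofFn fun i => Fin.castSucc (σ i)) ++ [Fin.last n] := FreeMonoid.ofList.injective h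
  have h3 := List.append_cancel_right h2
  rw [List.ofFn_inj] at h3
  exact Equiv.ext fun i => Fin.castSucc_injective n (congrFun h3 i)

lemma key (σ τ : Equiv.Perm (Fin n)) :
    B.coord (wperm σ) (phi (lam n τ)) = if τ = σ then 1 else 0 := by
  have hd := expansion (List.ofFn fun i => Fin.castSucc (τ i)) (by
    intro a ha
    rw [List.mem_ofFn] at ha
    obtain ⟨j, rfl⟩ := ha
    exact castSucc_ne_last _)
  rw [lam_eq_E]
  have hsplit : phi (E (List.ofFn fun i => Fin.castSucc (τ i)))
      = B (wperm τ) + (phi (E (List.ofFn fun i => Fin.castSucc (τ i))) - B (wperm τ)) := by abel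
  have hd' : phi (E (List.ofFn fun i => Fin.castSucc (τ i))) - B (wperm τ) ∈ S := hd
  classical
  rw [hsplit, map_add, coord_S hd', add_zero, Module.Basis.coord_apply, Module.Basis.repr_self,
    Finsupp.single_apply]
  by_cases h : τ = σ
  · subst h; rw [if_pos rfl, if_pos rfl]
  · rw [if_neg (fun hc => h (wperm_inj hc)), if_neg h]

lemma lam_li : LinearIndependent ℤ (lam n) := by
  rw [Fintype.linearIndependent_iff]
  intro g hg σ
  let F : FreeLieAlgebra ℤ (Fin (n+1)) →ₗ[ℤ] ℤ :=
    (B.coord (wperm σ)).comp (phi (n := n) : _ →ₗ⁅ℤ⁆ _).toLinearMap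
  have h0 : F (∑ τ, g τ • lam n τ) = 0 := by rw [hg, map_zero]
  rw [map_sum] at h0
  have hF : ∀ τ, F (lam n τ) = if τ = σ then 1 else 0 := by
    intro τ
    show B.coord (wperm σ) ((phi (n := n) : _ →ₗ⁅ℤ⁆ _).toLinearMap (lam n τ)) = _
    rw [LieHom.coe_toLinearMap]
    exact key σ τ
  simp only [map_smul, hF, smul_eq_mul, mul_ite, mul_one, mul_zero, Finset.sum_ite_eq',
    Finset.mem_univ, if_true] at h0
  exact h0

end

end LamAux

/-- the left-regulated Lie brackets `λ_σ`, for `σ` ranging over the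
permutations of the first `n - 1` generators, form a ℤ-basis of the multilinear part
of the free Lie ring on `n` generators (here `n + 1` generators, `σ ∈ Perm (Fin n)`). -/
theorem lam_basis_of_lieN (n : ℕ) :
    LinearIndependent ℤ (lam n) ∧
      Submodule.span ℤ (Set.range (lam n)) = LieN (n + 1) :=
  ⟨LamAux.lam_li, LamAux.span_eq⟩
end

section
/- The restriction of the Σ_n-representation Lie_n to the subgroup Σ_{n-1} (permutations fixing n) is isomorphic to the regular integral representation ℤ[Σ_{n-1}]. -/
open FreeLieAlgebra

/-- The action of a permutation `σ` of the generators on the free Lie ring, by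
permuting the generators. -/
noncomputable def actPerm {n : ℕ} (σ : Equiv.Perm (Fin n)) :
    FreeLieAlgebra ℤ (Fin n) →ₗ⁅ℤ⁆ FreeLieAlgebra ℤ (Fin n) :=
  FreeLieAlgebra.lift ℤ fun i => of ℤ (σ i)

/-- The extension of a permutation of `Fin n` to a permutation of `Fin (n+1)` fixing
the last element. -/
def extendPerm {n : ℕ} (τ : Equiv.Perm (Fin n)) : Equiv.Perm (Fin (n + 1)) :=
  (Equiv.permCongr finSuccEquivLast.symm) (Equiv.optionCongr τ)


noncomputable def lw (n : ℕ) (l : List (Fin (n+1))) : FreeLieAlgebra ℤ (Fin (n+1)) :=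
  l.foldr (fun i a => ⁅of ℤ i, a⁆) (of ℤ (Fin.last n))
attribute [local instance 100] LieRing.ofAssociativeRing

noncomputable def L2A (n : ℕ) : FreeLieAlgebra ℤ (Fin (n+1)) →ₗ⁅ℤ⁆ FreeAlgebra ℤ (Fin (n+1)) :=
  FreeLieAlgebra.lift ℤ (FreeAlgebra.ι ℤ)
noncomputable def EE (n : ℕ) : FreeAlgebra ℤ (Fin (n+1)) ≃ₐ[ℤ] MonoidAlgebra ℤ (FreeMonoid (Fin (n+1))) :=
  FreeAlgebra.equivMonoidAlgebraFreeMonoid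

lemma EE_L2A_of (n : ℕ) (i : Fin (n+1)) :
    EE n (L2A n (of ℤ i)) = MonoidAlgebra.single (FreeMonoid.of i) 1 := by
  simp [EE, L2A, FreeAlgebra.equivMonoidAlgebraFreeMonoid, FreeLieAlgebra.lift_of_apply]
  erw [FreeLieAlgebra.lift_of_apply]
  simp

lemma L2A_lw_cons (n : ℕ) (i : Fin (n+1)) (l : List (Fin (n+1))) :
    EE n (L2A n (lw n (i :: l))) =
      MonoidAlgebra.single (FreeMonoid.of i) 1 * EE n (L2A n (lw n l))
        - EE n (L2A n (lw n l)) * MonoidAlgebra.single (FreeMonoid.of i) 1 := by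
  have h0 : lw n (i :: l) = ⁅of ℤ i, lw n l⁆ := rfl
  rw [h0, LieHom.map_lie, Ring.lie_def, map_sub, map_mul, map_mul, EE_L2A_of]

lemma coeff_lw (n : ℕ) (l : List (Fin (n+1))) (hl : ∀ i ∈ l, i ≠ Fin.last n)
    (u : List (Fin (n+1))) :
    (EE n (L2A n (lw n l))).coeff (FreeMonoid.ofList (u ++ [Fin.last n])) = if u = l then 1 else 0 := by
  classical
  induction l generalizing u with
  | nil =>
    have h : EE n (L2A n (lw n [])) = MonoidAlgebra.single (FreeMonoid.of (Fin.last n)) 1 :=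
      EE_L2A_of n (Fin.last n)
    rw [h, MonoidAlgebra.coeff_single_apply]
    congr 1
    simp only [eq_iff_iff]
    constructor
    · intro h'
      have h2 := congrArg FreeMonoid.toList h'
      simp only [FreeMonoid.toList_of, FreeMonoid.toList_ofList] at h2
      cases u with
      | nil => rfl
      | cons a u' =>
        have := congrArg List.length h2
        simp at this
    · rintro rfl; rfl
  | cons i l ih =>
    rw [L2A_lw_cons, MonoidAlgebra.coeff_sub, Finsupp.sub_apply]
    set P : MonoidAlgebra ℤ (FreeMonoid (Fin (n+1))) := EE n (L2A n (lw n l)) with hP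
    have h2 : (P * MonoidAlgebra.single (FreeMonoid.of i) 1 :
        MonoidAlgebra ℤ (FreeMonoid (Fin (n+1)))).coeff (FreeMonoid.ofList (u ++ [Fin.last n])) = 0 := by
      apply MonoidAlgebra.mul_single_apply_of_not_exists_mul
      rintro ⟨d, hd⟩
      have h3 := congrArg (fun x => (FreeMonoid.toList x).getLast?) hd
      simp only [FreeMonoid.toList_ofList, FreeMonoid.toList_mul, FreeMonoid.toList_of] at h3
      rw [List.getLast?_append, List.getLast?_append] at h3
      simp at h3
      exact hl i (by simp) h3.symm
    rw [h2, sub_zero]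
    cases u with
    | nil =>
      have h1 : (MonoidAlgebra.single (FreeMonoid.of i) 1 * P :
          MonoidAlgebra ℤ (FreeMonoid (Fin (n+1)))).coeff (FreeMonoid.ofList ([] ++ [Fin.last n])) = 0 := by
        apply MonoidAlgebra.single_mul_apply_of_not_exists_mul
        rintro ⟨d, hd⟩
        have h3 := congrArg FreeMonoid.toList hd
        simp only [FreeMonoid.toList_ofList, FreeMonoid.toList_mul, FreeMonoid.toList_of,
          List.nil_append, List.singleton_append] at h3
        have h4 : Fin.last n = i := by
          have h5 := congrArg List.head? h3
          simpa using h5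
        exact hl i (by simp) h4.symm
      rw [h1]
      have : ([] : List (Fin (n+1))) ≠ i :: l := by simp
      simp [this]
    | cons j u' =>
      by_cases hji : j = i
      · subst hji
        have H : ∀ a : FreeMonoid (Fin (n+1)), FreeMonoid.of j * a =
            FreeMonoid.ofList ((j :: u') ++ [Fin.last n]) ↔
            a = FreeMonoid.ofList (u' ++ [Fin.last n]) := by
          intro a
          constructor
          · intro h'
            have h3 := congrArg FreeMonoid.toList h'
            simp only [FreeMonoid.toList_mul, FreeMonoid.toList_of, FreeMonoid.toList_ofList,
              List.singleton_append, List.cons_append, List.cons.injEq, true_and] at h3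
            exact FreeMonoid.toList.injective h3
          · rintro rfl; rfl
        rw [MonoidAlgebra.single_mul_apply_aux (x := P) _ (fun a _ => H a), one_mul,
          ih (fun x hx => hl x (by simp [hx])) u']
        simp
      · have h1 : (MonoidAlgebra.single (FreeMonoid.of i) 1 * P :
            MonoidAlgebra ℤ (FreeMonoid (Fin (n+1)))).coeff (FreeMonoid.ofList ((j :: u') ++ [Fin.last n])) = 0 := by
          apply MonoidAlgebra.single_mul_apply_of_not_exists_mul
          rintro ⟨d, hd⟩
          have h3 := congrArg FreeMonoid.toList hd
          simp only [FreeMonoid.toList_ofList, FreeMonoid.toList_mul, FreeMonoid.toList_of,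
            List.singleton_append, List.cons_append] at h3
          have h4 : j = i := by
            have h5 := congrArg List.head? h3
            simpa using h5
          exact hji h4
        rw [h1]
        have : j :: u' ≠ i :: l := by simp [hji]
        simp [this]

lemma islm_lw (n : ℕ) (l : List (Fin (n+1))) (hnd : l.Nodup) (hl : ∀ i ∈ l, i ≠ Fin.last n) :
    IsLieMono (lw n l) (insert (Fin.last n) l.toFinset) := by
  induction l with
  | nil => simpa [lw] using IsLieMono.of (Fin.last n)
  | cons i l ih =>
    have hset : insert (Fin.last n) (i :: l).toFinset = {i} ∪ insert (Fin.last n) l.toFinset := by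
      ext x; simp; try tauto
    rw [hset]
    have hd : Disjoint ({i} : Finset (Fin (n+1))) (insert (Fin.last n) l.toFinset) := by
      simp only [Finset.disjoint_singleton_left, Finset.mem_insert, List.mem_toFinset]
      push_neg
      exact ⟨hl i (by simp), (List.nodup_cons.mp hnd).1⟩
    exact IsLieMono.bracket (IsLieMono.of i) (ih (List.nodup_cons.mp hnd).2
      (fun x hx => hl x (by simp [hx]))) hd

noncomputable def ww (n : ℕ) (σ : Equiv.Perm (Fin n)) : FreeLieAlgebra ℤ (Fin (n+1)) :=
  lw n ((List.ofFn σ).map Fin.castSucc)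

lemma ww_list_nodup (n : ℕ) (σ : Equiv.Perm (Fin n)) :
    ((List.ofFn σ).map Fin.castSucc).Nodup :=
  (List.nodup_ofFn.mpr σ.injective).map (Fin.castSucc_injective n)

lemma ww_list_ne_last (n : ℕ) (σ : Equiv.Perm (Fin n)) :
    ∀ i ∈ (List.ofFn σ).map Fin.castSucc, i ≠ Fin.last n := by
  intro i hi
  simp only [List.mem_map, List.mem_ofFn] at hi
  obtain ⟨a, _, rfl⟩ := hi
  exact (Fin.castSucc_lt_last a).ne

lemma islm_ww (n : ℕ) (σ : Equiv.Perm (Fin n)) : IsLieMono (ww n σ) Finset.univ := by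
  have h := islm_lw n _ (ww_list_nodup n σ) (ww_list_ne_last n σ)
  have hset : insert (Fin.last n) ((List.ofFn σ).map Fin.castSucc).toFinset = Finset.univ := by
    ext x
    simp only [Finset.mem_insert, List.mem_toFinset, List.mem_map, List.mem_ofFn,
      Finset.mem_univ, iff_true]
    rcases Fin.eq_castSucc_or_eq_last x with ⟨y, rfl⟩ | rfl
    · exact Or.inr ⟨y, ⟨σ.symm y, by simp⟩, rfl⟩
    · exact Or.inl rfl
  rwa [hset] at h

lemma ww_mem_lieN (n : ℕ) (σ : Equiv.Perm (Fin n)) : ww n σ ∈ LieN (n+1) :=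
  Submodule.subset_span (islm_ww n σ)

noncomputable def Sp (n : ℕ) (u : Finset (Fin (n+1))) :
    Submodule ℤ (FreeLieAlgebra ℤ (Fin (n+1))) :=
  Submodule.span ℤ {x | ∃ l : List (Fin (n+1)),
    l.Nodup ∧ (Fin.last n) ∉ l ∧ l.toFinset = u ∧ x = lw n l}

lemma brkt_span (n : ℕ) (a : FreeLieAlgebra ℤ (Fin (n+1))) (s u : Finset (Fin (n+1)))
    (hs : Disjoint s u)
    (H : ∀ l : List (Fin (n+1)), l.Nodup → Fin.last n ∉ l → Disjoint s l.toFinset →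
      ⁅a, lw n l⁆ ∈ Sp n (s ∪ l.toFinset))
    {y} (hy : y ∈ Sp n u) : ⁅a, y⁆ ∈ Sp n (s ∪ u) := by
  induction hy using Submodule.span_induction with
  | mem x hx =>
    obtain ⟨l, hnd, hll, hlt, rfl⟩ := hx
    have h := H l hnd hll (hlt ▸ hs)
    rwa [hlt] at h
  | zero => simp only [lie_zero]; exact zero_mem _
  | add y z _ _ hy hz => rw [lie_add]; exact add_mem hy hz
  | smul c y _ hy => rw [lie_smul]; exact Submodule.smul_mem _ c hy

lemma lemA (n : ℕ) {a : FreeLieAlgebra ℤ (Fin (n+1))} {s : Finset (Fin (n+1))}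
    (ha : IsLieMono a s) : Fin.last n ∉ s →
    ∀ l : List (Fin (n+1)), l.Nodup → Fin.last n ∉ l → Disjoint s l.toFinset →
      ⁅a, lw n l⁆ ∈ Sp n (s ∪ l.toFinset) := by
  induction ha with
  | of i =>
    intro hs l hnd hll hdisj
    apply Submodule.subset_span
    refine ⟨i :: l, ?_, ?_, ?_, rfl⟩
    · exact List.nodup_cons.mpr
        ⟨by simpa using Finset.disjoint_singleton_left.mp hdisj, hnd⟩
    · simp only [List.mem_cons, not_or]
      exact ⟨fun h => hs (by simp [h]), hll⟩
    · rw [List.toFinset_cons, Finset.insert_eq]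
  | bracket ha hb hab iha ihb =>
    rename_i a b s t
    intro hst l hnd hll hdisj
    have hs : Fin.last n ∉ s := fun h => hst (Finset.mem_union_left _ h)
    have ht : Fin.last n ∉ t := fun h => hst (Finset.mem_union_right _ h)
    have hsl : Disjoint s l.toFinset :=
      (Finset.disjoint_union_left.mp hdisj).1
    have htl : Disjoint t l.toFinset :=
      (Finset.disjoint_union_left.mp hdisj).2
    rw [lie_lie]
    have h1 : ⁅a, ⁅b, lw n l⁆⁆ ∈ Sp n (s ∪ (t ∪ l.toFinset)) := by
      apply brkt_span n a s (t ∪ l.toFinset)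
        (Finset.disjoint_union_right.mpr ⟨hab, hsl⟩) (iha hs)
      exact ihb ht l hnd hll htl
    have h2 : ⁅b, ⁅a, lw n l⁆⁆ ∈ Sp n (t ∪ (s ∪ l.toFinset)) := by
      apply brkt_span n b t (s ∪ l.toFinset)
        (Finset.disjoint_union_right.mpr ⟨hab.symm, htl⟩) (ihb ht)
      exact iha hs l hnd hll hsl
    rw [show s ∪ (t ∪ l.toFinset) = s ∪ t ∪ l.toFinset from (Finset.union_assoc _ _ _).symm] at h1
    rw [show t ∪ (s ∪ l.toFinset) = s ∪ t ∪ l.toFinset by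
      rw [← Finset.union_assoc, Finset.union_comm t s]] at h2
    exact sub_mem h1 h2

lemma lemB (n : ℕ) {a : FreeLieAlgebra ℤ (Fin (n+1))} {s : Finset (Fin (n+1))}
    (ha : IsLieMono a s) : Fin.last n ∈ s → a ∈ Sp n (s.erase (Fin.last n)) := by
  induction ha with
  | of i =>
    intro hs
    have hi : Fin.last n = i := by simpa using hs
    subst hi
    apply Submodule.subset_span
    exact ⟨[], by simp, by simp, by simp, rfl⟩
  | bracket ha hb hab iha ihb =>
    rename_i a b s t
    intro hst
    by_cases hlt : Fin.last n ∈ t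
    · have hls : Fin.last n ∉ s := fun h => (Finset.disjoint_left.mp hab h) hlt
      have h1 : ⁅a, b⁆ ∈ Sp n (s ∪ t.erase (Fin.last n)) := by
        apply brkt_span n a s (t.erase (Fin.last n))
          (hab.mono_right (Finset.erase_subset _ _)) (lemA n ha hls)
        exact ihb hlt
      rwa [show s ∪ t.erase (Fin.last n) = (s ∪ t).erase (Fin.last n) by
        ext x
        by_cases hx : x = Fin.last n
        · simp only [hx, Finset.mem_union, Finset.mem_erase, ne_eq, not_true_eq_false,
            false_and, or_false]
          simpa using hls
        · simp [hx]] at h1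
    · have hls : Fin.last n ∈ s := by
        rcases Finset.mem_union.mp hst with h | h
        · exact h
        · exact absurd h hlt
      rw [← lie_skew]
      apply neg_mem
      have h1 : ⁅b, a⁆ ∈ Sp n (t ∪ s.erase (Fin.last n)) := by
        apply brkt_span n b t (s.erase (Fin.last n))
          (hab.symm.mono_right (Finset.erase_subset _ _)) (lemA n hb hlt)
        exact iha hls
      rwa [show t ∪ s.erase (Fin.last n) = (s ∪ t).erase (Fin.last n) by
        ext x
        by_cases hx : x = Fin.last n
        · simp only [hx, Finset.mem_union, Finset.mem_erase, ne_eq, not_true_eq_false,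
            false_and, or_false]
          simpa using hlt
        · simp [hx]; tauto] at h1

lemma exists_perm (n : ℕ) (l : List (Fin (n+1))) (hnd : l.Nodup) (hll : Fin.last n ∉ l)
    (hlt : l.toFinset = Finset.univ.erase (Fin.last n)) :
    ∃ σ : Equiv.Perm (Fin n), (List.ofFn σ).map Fin.castSucc = l := by
  have hlen : l.length = n := by
    have h1 := List.toFinset_card_of_nodup hnd
    rw [hlt, Finset.card_erase_of_mem (Finset.mem_univ _)] at h1
    simpa using h1.symm
  have hget : ∀ k : Fin l.length, l.get k ≠ Fin.last n :=
    fun k hc => hll (hc ▸ (by simpa using List.get_mem l k.1 k.2))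
  let f : Fin n → Fin n := fun k => (l.get (Fin.cast hlen.symm k)).castPred (hget _)
  have hf : Function.Injective f := by
    intro k1 k2 h
    simp only [f] at h
    have h2 : l.get (Fin.cast hlen.symm k1) = l.get (Fin.cast hlen.symm k2) := by
      have h' := congrArg Fin.castSucc h
      rwa [Fin.castSucc_castPred, Fin.castSucc_castPred] at h'
    have h3 := List.nodup_iff_injective_get.mp hnd h2
    exact Fin.cast_injective _ h3
  refine ⟨Equiv.ofBijective f (Finite.injective_iff_bijective.mp hf), ?_⟩
  apply List.ext_get
  · simp [hlen]
  · intro i h1 h2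
    simp only [List.get_eq_getElem, List.getElem_map, List.getElem_ofFn]
    show Fin.castSucc (Equiv.ofBijective f _ _) = _
    rw [Equiv.ofBijective_apply]
    simp only [f, Fin.castSucc_castPred]
    congr 1

lemma lieN_eq_span_ww (n : ℕ) :
    LieN (n+1) = Submodule.span ℤ (Set.range (ww n)) := by
  apply le_antisymm
  · have h1 : LieN (n+1) ≤ Sp n (Finset.univ.erase (Fin.last n)) :=
      Submodule.span_le.mpr (fun a ha => lemB n ha (Finset.mem_univ _))
    refine h1.trans (Submodule.span_le.mpr ?_)
    rintro x ⟨l, hnd, hll, hlt, rfl⟩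
    obtain ⟨σ, hσ⟩ := exists_perm n l hnd hll hlt
    exact Submodule.subset_span ⟨σ, by rw [ww, hσ]⟩
  · exact Submodule.span_le.mpr (by rintro x ⟨σ, rfl⟩; exact ww_mem_lieN n σ)

lemma coeff_ww (n : ℕ) (σ τ : Equiv.Perm (Fin n)) :
    (EE n (L2A n (ww n σ))).coeff
      (FreeMonoid.ofList ((List.ofFn τ).map Fin.castSucc ++ [Fin.last n])) =
      if τ = σ then 1 else 0 := by
  rw [ww, coeff_lw n _ (ww_list_ne_last n σ)]
  congr 1
  simp only [eq_iff_iff]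
  constructor
  · intro h
    have h2 := List.map_injective_iff.mpr (Fin.castSucc_injective n) h
    exact Equiv.ext (congrFun (List.ofFn_injective h2))
  · rintro rfl; rfl

noncomputable def GG (n : ℕ) :
    FreeLieAlgebra ℤ (Fin (n+1)) →ₗ[ℤ] MonoidAlgebra ℤ (FreeMonoid (Fin (n+1))) :=
  (EE n).toLinearMap ∘ₗ (L2A n).toLinearMap

lemma GG_apply (n : ℕ) (x : FreeLieAlgebra ℤ (Fin (n+1))) : GG n x = EE n (L2A n x) := rfl

lemma ma_smul_apply {M : Type*} (c : ℤ) (f : MonoidAlgebra ℤ M) (w : M) :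
    (c • f).coeff w = c * f.coeff w := rfl

lemma li_ww (n : ℕ) : LinearIndependent ℤ (ww n) := by
  rw [Fintype.linearIndependent_iff]
  intro c hc τ
  have h1 : GG n (∑ σ, c σ • ww n σ) = 0 := by rw [hc]; simp
  rw [map_sum] at h1
  simp only [map_smul] at h1
  have h2 := congrArg (fun f : MonoidAlgebra ℤ (FreeMonoid (Fin (n+1))) =>
    f.coeff (FreeMonoid.ofList ((List.ofFn τ).map Fin.castSucc ++ [Fin.last n]))) h1
  simp only [MonoidAlgebra.coeff_zero, Finsupp.coe_zero, Pi.zero_apply] at h2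
  rw [MonoidAlgebra.coeff_sum, Finsupp.finset_sum_apply] at h2
  simp only [ma_smul_apply, GG_apply, coeff_ww] at h2
  rw [Finset.sum_eq_single τ] at h2
  · simpa using h2
  · intro b _ hb
    simp [Ne.symm hb]
  · simp

lemma extendPerm_castSucc {n : ℕ} (τ : Equiv.Perm (Fin n)) (j : Fin n) :
    extendPerm τ (Fin.castSucc j) = Fin.castSucc (τ j) := by
  simp [extendPerm, Equiv.permCongr_apply]

lemma extendPerm_last {n : ℕ} (τ : Equiv.Perm (Fin n)) :
    extendPerm τ (Fin.last n) = Fin.last n := by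
  simp [extendPerm, Equiv.permCongr_apply]

lemma actPerm_lw (n : ℕ) (π : Equiv.Perm (Fin (n+1))) (hπ : π (Fin.last n) = Fin.last n)
    (l : List (Fin (n+1))) : actPerm π (lw n l) = lw n (l.map π) := by
  induction l with
  | nil =>
    show actPerm π (of ℤ (Fin.last n)) = of ℤ (Fin.last n)
    rw [actPerm]; erw [FreeLieAlgebra.lift_of_apply, hπ]
  | cons i l ih =>
    show actPerm π ⁅of ℤ i, lw n l⁆ = ⁅of ℤ (π i), lw n (l.map π)⁆
    rw [LieHom.map_lie, ih, actPerm]; erw [FreeLieAlgebra.lift_of_apply]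

lemma actPerm_ww (n : ℕ) (τ : Equiv.Perm (Fin n)) (σ : Equiv.Perm (Fin n)) :
    actPerm (extendPerm τ) (ww n σ) = ww n (τ * σ) := by
  rw [ww, actPerm_lw n _ (extendPerm_last τ)]
  congr 1
  rw [List.map_map, List.map_ofFn, List.map_ofFn]
  congr 1
  funext k
  simp [Function.comp, extendPerm_castSucc, Equiv.Perm.mul_apply]

lemma actPerm_maps (n : ℕ) (τ : Equiv.Perm (Fin n)) :
    ∀ x ∈ LieN (n+1), (actPerm (extendPerm τ)).toLinearMap x ∈ LieN (n+1) := by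
  intro x hx
  rw [lieN_eq_span_ww] at hx ⊢
  induction hx using Submodule.span_induction with
  | mem y hy =>
    obtain ⟨σ, rfl⟩ := hy
    rw [LieHom.coe_toLinearMap, actPerm_ww]
    exact Submodule.subset_span ⟨τ * σ, rfl⟩
  | zero => simp
  | add y z _ _ hy hz => rw [map_add]; exact add_mem hy hz
  | smul c y _ hy => rw [map_smul]; exact Submodule.smul_mem _ c hy

noncomputable def wwL (n : ℕ) (σ : Equiv.Perm (Fin n)) : LieN (n+1) :=
  ⟨ww n σ, ww_mem_lieN n σ⟩

lemma li_wwL (n : ℕ) : LinearIndependent ℤ (wwL n) := by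
  apply LinearIndependent.of_comp (LieN (n+1)).subtype
  exact li_ww n

lemma span_wwL (n : ℕ) : ⊤ ≤ Submodule.span ℤ (Set.range (wwL n)) := by
  have h : Submodule.map (LieN (n+1)).subtype (Submodule.span ℤ (Set.range (wwL n))) =
      Submodule.map (LieN (n+1)).subtype ⊤ := by
    rw [Submodule.map_span, Submodule.map_top, Submodule.range_subtype, ← Set.range_comp]
    exact (lieN_eq_span_ww n).symm
  exact le_of_eq (Submodule.map_injective_of_injective
    (LieN (n+1)).injective_subtype h).symm

noncomputable def bb (n : ℕ) : Module.Basis (Equiv.Perm (Fin n)) ℤ (LieN (n+1)) :=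
  Module.Basis.mk (li_wwL n) (span_wwL n)

noncomputable def AA (n : ℕ) (τ : Equiv.Perm (Fin n)) : LieN (n+1) →ₗ[ℤ] LieN (n+1) :=
  ((actPerm (extendPerm τ)).toLinearMap).restrict (actPerm_maps n τ)

lemma AA_wwL (n : ℕ) (τ σ : Equiv.Perm (Fin n)) : AA n τ (wwL n σ) = wwL n (τ * σ) := by
  apply Subtype.ext
  show (actPerm (extendPerm τ)).toLinearMap (ww n σ) = ww n (τ * σ)
  rw [LieHom.coe_toLinearMap, actPerm_ww]

lemma key (n : ℕ) (τ : Equiv.Perm (Fin n)) (x : LieN (n+1)) :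
    (bb n).repr (AA n τ x) = Finsupp.mapDomain (fun ρ => τ * ρ) ((bb n).repr x) := by
  have h : ((bb n).repr.toLinearMap ∘ₗ AA n τ) =
      (Finsupp.lmapDomain ℤ ℤ (fun ρ => τ * ρ) ∘ₗ (bb n).repr.toLinearMap) := by
    apply Module.Basis.ext (bb n)
    intro σ
    simp only [LinearMap.comp_apply, LinearEquiv.coe_toLinearMap]
    rw [show (bb n) σ = wwL n σ from Module.Basis.mk_apply _ _ _, AA_wwL,
      show wwL n (τ * σ) = (bb n) (τ * σ) from (Module.Basis.mk_apply _ _ _).symm,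
      show wwL n σ = (bb n) σ from (Module.Basis.mk_apply _ _ _).symm,
      Module.Basis.repr_self, Module.Basis.repr_self, Finsupp.lmapDomain_apply, Finsupp.mapDomain_single]
  exact congrFun (congrArg DFunLike.coe h) x

/-- the restriction of the `Σ_n`-representation `Lie_n` to the subgroup
`Σ_{n-1}` of permutations fixing the last generator is isomorphic to the regular
integral representation `ℤ[Σ_{n-1}]`.  (Here `Lie_{n+1}` restricted to
`Σ_n = Perm (Fin n)`, acting via `extendPerm`, is the regular representation.) -/
theorem lieN_res_regular (n : ℕ) :
    ∃ e : LieN (n + 1) ≃ₗ[ℤ] (Equiv.Perm (Fin n) →₀ ℤ),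
      ∀ (τ : Equiv.Perm (Fin n)) (x : LieN (n + 1))
        (h : actPerm (extendPerm τ) (x : FreeLieAlgebra ℤ (Fin (n + 1))) ∈ LieN (n + 1)),
        e ⟨actPerm (extendPerm τ) (x : FreeLieAlgebra ℤ (Fin (n + 1))), h⟩ =
          Finsupp.mapDomain (fun ρ => τ * ρ) (e x) := by
  refine ⟨(bb n).repr, ?_⟩
  intro τ x h
  have hx : (⟨actPerm (extendPerm τ) (x : FreeLieAlgebra ℤ (Fin (n + 1))), h⟩ : LieN (n+1)) =
      AA n τ x := Subtype.ext rfl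
  rw [hx, key]
end

section
/- The left-regulated super-Lie brackets λ_σ = [x_{σ(1)},[x_{σ(2)},[...,[x_{σ(n-1)},x_n]...]]], for σ a permutation of {1,...,n-1}, form a ℤ-basis of the multilinear part 𝔖_n of the free Lie superalgebra on odd generators x_1,...,x_n. -/
/-- A Lie superring (Lie superalgebra over ℤ): a ℤ/2-graded abelian group with a
biadditive bracket satisfying graded antisymmetry `[a,b] = (-1)^{|a||b|+1}[b,a]` and the
graded Jacobi identity `[[a,b],c] = [a,[b,c]] - (-1)^{|a||b|}[b,[a,c]]` for homogeneous
elements. Homogeneity of degree `p : ZMod 2` is recorded by the predicate `isHomog p`. -/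
structure LieSuperringStruct (L : Type*) [AddCommGroup L] where
  bracket : L → L → L
  isHomog : ZMod 2 → L → Prop
  add_left : ∀ a b c : L, bracket (a + b) c = bracket a c + bracket b c
  add_right : ∀ a b c : L, bracket a (b + c) = bracket a b + bracket a c
  isHomog_bracket : ∀ {p q : ZMod 2} {a b : L}, isHomog p a → isHomog q b →
      isHomog (p + q) (bracket a b)
  antisymm : ∀ {p q : ZMod 2} {a b : L}, isHomog p a → isHomog q b →
      bracket a b = ((-1 : ℤ) ^ (p.val * q.val + 1)) • bracket b a
  jacobi : ∀ {p q : ZMod 2} {a b : L} (c : L), isHomog p a → isHomog q b →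
      bracket (bracket a b) c =
        bracket a (bracket b c) - ((-1 : ℤ) ^ (p.val * q.val)) • bracket b (bracket a c)

/-- `IsFreeOddLieSuperring S x` : the Lie superring `(L, S)` is free over ℤ on the
odd-degree generators `x i` — each `x i` is homogeneous of odd degree, and for any
Lie superring `(M, T)` and odd-degree elements `y i` there is a unique additive,
bracket-preserving map sending `x i` to `y i`. -/
structure IsFreeOddLieSuperring {L : Type} [AddCommGroup L] {n : ℕ}
    (S : LieSuperringStruct L) (x : Fin n → L) : Prop where
  odd : ∀ i, S.isHomog 1 (x i)
  free : ∀ (M : Type) (_ : AddCommGroup M) (T : LieSuperringStruct M) (y : Fin n → M),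
      (∀ i, T.isHomog 1 (y i)) →
      ∃! f : L →+ M, (∀ i, f (x i) = y i) ∧
        ∀ a b : L, f (S.bracket a b) = T.bracket (f a) (f b)

/-- `IsSuperMono S x a s` : `a` is a super-Lie monomial in the generators `x i` for
`i ∈ s`, each occurring exactly once. -/
inductive IsSuperMono {L : Type} [AddCommGroup L] {n : ℕ}
    (S : LieSuperringStruct L) (x : Fin n → L) : L → Finset (Fin n) → Prop
  | of (i : Fin n) : IsSuperMono S x (x i) {i}
  | bracket {a b : L} {s t : Finset (Fin n)} :
      IsSuperMono S x a s → IsSuperMono S x b t → Disjoint s t →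
      IsSuperMono S x (S.bracket a b) (s ∪ t)

/-- `SuperN S x` : the multilinear part `𝔖_n` of the free Lie superring — the ℤ-span
of the super-Lie monomials containing each generator exactly once. -/
def SuperN {L : Type} [AddCommGroup L] {n : ℕ}
    (S : LieSuperringStruct L) (x : Fin n → L) : Submodule ℤ L :=
  Submodule.span ℤ {a | IsSuperMono S x a Finset.univ}

/-- The left-regulated super-Lie bracket
`λ_σ = [x_{σ(1)}, [x_{σ(2)}, [ ... [x_{σ(n-1)}, x_n] ... ]]]` in a Lie superring with
generators indexed by `Fin (n+1)`, for a permutation `σ` of the first `n` indices. -/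
def lamS {L : Type} [AddCommGroup L] {n : ℕ} (S : LieSuperringStruct L)
    (x : Fin (n + 1) → L) (σ : Equiv.Perm (Fin n)) : L :=
  (List.ofFn fun i : Fin n => x (Fin.castSucc (σ i))).foldr
    (fun a acc => S.bracket a acc) (x (Fin.last n))


namespace LamSAux

lemma zmod2_cases (p : ZMod 2) : p = 0 ∨ p = 1 := by revert p; decide

abbrev A (ι : Type) := MonoidAlgebra ℤ (FreeMonoid ι)

variable {ι : Type}

/-- degree of a word -/
def dg (w : FreeMonoid ι) : ZMod 2 := ((FreeMonoid.toList w).length : ZMod 2)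

/-- homogeneous of degree p -/
def Hm (p : ZMod 2) (a : A ι) : Prop := ∀ w ∈ a.coeff.support, dg w = p

/-- projection to degree-p part -/
noncomputable def pr (p : ZMod 2) (a : A ι) : A ι :=
  MonoidAlgebra.ofCoeff (a.coeff.filter (fun w => dg w = p))

lemma pr_add (p : ZMod 2) (a b : A ι) : pr p (a + b) = pr p a + pr p b :=
  congrArg MonoidAlgebra.ofCoeff Finsupp.filter_add

lemma pr_zero (p : ZMod 2) : pr p (0 : A ι) = 0 := congrArg MonoidAlgebra.ofCoeff (Finsupp.filter_zero _)

lemma Hm_pr (p : ZMod 2) (a : A ι) : Hm p (pr p a) := by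
  intro w hw
  rw [pr, MonoidAlgebra.coeff_ofCoeff, Finsupp.support_filter, Finset.mem_filter] at hw
  exact hw.2

lemma pr_eq_self {p : ZMod 2} {a : A ι} (h : Hm p a) : pr p a = a := by
  apply MonoidAlgebra.coeff_injective; rw [pr, MonoidAlgebra.coeff_ofCoeff]
  apply Finsupp.filter_eq_self_iff _ _ |>.2
  intro w hw
  exact h w (Finsupp.mem_support_iff.2 hw)

lemma pr_eq_zero {p q : ZMod 2} {a : A ι} (h : Hm p a) (hq : q ≠ p) : pr q a = 0 := by
  ext w
  rw [pr, MonoidAlgebra.coeff_ofCoeff, Finsupp.filter_apply]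
  split_ifs with hd
  · by_cases hw : a.coeff w = 0
    · simpa using hw
    · exact absurd (hd ▸ h w (Finsupp.mem_support_iff.2 hw)) hq
  · rfl

lemma pr_decomp (a : A ι) : pr 0 a + pr 1 a = a := by
  ext w
  rw [MonoidAlgebra.coeff_add, Finsupp.add_apply, pr, pr, MonoidAlgebra.coeff_ofCoeff,
    MonoidAlgebra.coeff_ofCoeff, Finsupp.filter_apply, Finsupp.filter_apply]
  rcases zmod2_cases (dg w) with h | h <;> simp [h]

lemma Hm_zero (p : ZMod 2) : Hm p (0 : A ι) := by intro w hw; simp at hw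

lemma Hm_add {p : ZMod 2} {a b : A ι} (ha : Hm p a) (hb : Hm p b) : Hm p (a + b) := by
  classical
  intro w hw
  rw [MonoidAlgebra.coeff_add] at hw
  rcases Finset.mem_union.1 (Finsupp.support_add hw) with h | h
  · exact ha w h
  · exact hb w h

lemma Hm_neg {p : ZMod 2} {a : A ι} (ha : Hm p a) : Hm p (-a) := by
  intro w hw; rw [MonoidAlgebra.coeff_neg, Finsupp.support_neg] at hw; exact ha w hw

lemma Hm_sub {p : ZMod 2} {a b : A ι} (ha : Hm p a) (hb : Hm p b) : Hm p (a - b) := by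
  rw [sub_eq_add_neg]; exact Hm_add ha (Hm_neg hb)

lemma Hm_smul {p : ZMod 2} {a : A ι} (k : ℤ) (ha : Hm p a) : Hm p (k • a) := by
  intro w hw
  apply ha w
  rw [Finsupp.mem_support_iff] at hw ⊢
  intro h0; apply hw
  rw [MonoidAlgebra.coeff_smul, Finsupp.smul_apply, h0, smul_zero]

lemma Hm_mul {p q : ZMod 2} {a b : A ι} (ha : Hm p a) (hb : Hm q b) : Hm (p + q) (a * b) := by
  classical
  intro w hw
  have := MonoidAlgebra.support_coeff_mul_subset a b hw
  rw [Finset.mem_mul] at this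
  obtain ⟨u, hu, v, hv, rfl⟩ := this
  have : dg (u * v) = dg u + dg v := by
    simp [dg, FreeMonoid.toList_mul]
  rw [this, ha u hu, hb v hv]

/-- the super bracket -/
noncomputable def br (a b : A ι) : A ι := a * b - b * a + 2 * (pr 1 b * pr 1 a)

lemma br_add_left (a b c : A ι) : br (a + b) c = br a c + br b c := by
  simp only [br, pr_add]
  noncomm_ring

lemma br_add_right (a b c : A ι) : br a (b + c) = br a b + br a c := by
  simp only [br, pr_add]
  noncomm_ring

lemma br_homog_eq {p q : ZMod 2} {a b : A ι} (ha : Hm p a) (hb : Hm q b) :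
    br a b = a * b - ((-1 : ℤ) ^ (p.val * q.val)) • (b * a) := by
  rcases zmod2_cases p with hp | hp <;> rcases zmod2_cases q with hq | hq <;> subst hp hq
  · rw [br, pr_eq_zero ha (by decide)]
    simp
  · rw [br, pr_eq_zero ha (by decide)]
    simp
  · rw [br, pr_eq_zero hb (by decide)]
    simp
  · rw [br, pr_eq_self ha, pr_eq_self hb]
    have : ((1 : ZMod 2).val * (1 : ZMod 2).val) = 1 := by decide
    rw [this]
    simp only [pow_one, neg_smul, one_smul, sub_neg_eq_add]
    noncomm_ring

lemma Hm_br {p q : ZMod 2} {a b : A ι} (ha : Hm p a) (hb : Hm q b) :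
    Hm (p + q) (br a b) := by
  rw [br_homog_eq ha hb]
  exact Hm_sub (Hm_mul ha hb) (Hm_smul _ (by rw [add_comm]; exact Hm_mul hb ha))

lemma br_antisymm {p q : ZMod 2} {a b : A ι} (ha : Hm p a) (hb : Hm q b) :
    br a b = ((-1 : ℤ) ^ (p.val * q.val + 1)) • br b a := by
  rw [br_homog_eq ha hb, br_homog_eq hb ha, Nat.mul_comm q.val p.val]
  rcases Nat.even_or_odd (p.val * q.val) with h | h
  · rw [h.neg_one_pow, (h.add_one).neg_one_pow]
    simp
  · rw [h.neg_one_pow, (by simpa using h.add_one : Even (p.val * q.val + 1)).neg_one_pow]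
    simp [smul_sub, sub_eq_add_neg, add_comm]

lemma br_jacobi_homog {p q r : ZMod 2} {a b c : A ι} (ha : Hm p a) (hb : Hm q b)
    (hc : Hm r c) :
    br (br a b) c = br a (br b c) - ((-1 : ℤ) ^ (p.val * q.val)) • br b (br a c) := by
  rw [br_homog_eq (Hm_br ha hb) hc, br_homog_eq ha hb,
      br_homog_eq ha (Hm_br hb hc), br_homog_eq hb hc,
      br_homog_eq hb (Hm_br ha hc), br_homog_eq ha hc]
  rcases zmod2_cases p with hp | hp <;> rcases zmod2_cases q with hq | hq <;>
    rcases zmod2_cases r with hr | hr <;> subst hp hq hr <;>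
    · simp only [show ((0 : ZMod 2) + 0 : ZMod 2) = 0 from rfl,
        show ((0 : ZMod 2) + 1 : ZMod 2) = 1 from rfl,
        show ((1 : ZMod 2) + 0 : ZMod 2) = 1 from rfl,
        show ((1 : ZMod 2) + 1 : ZMod 2) = 0 from rfl,
        show (0 : ZMod 2).val = 0 from rfl, show (1 : ZMod 2).val = 1 from rfl]
      push_cast
      simp only [pow_zero, pow_one, one_smul, neg_one_smul, smul_sub, smul_neg, smul_smul,
        mul_sub, sub_mul, mul_smul_comm, smul_mul_assoc, neg_mul, mul_neg, one_mul, mul_one]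
      noncomm_ring

lemma br_jacobi {p q : ZMod 2} {a b : A ι} (c : A ι) (ha : Hm p a) (hb : Hm q b) :
    br (br a b) c = br a (br b c) - ((-1 : ℤ) ^ (p.val * q.val)) • br b (br a c) := by
  have h0 := Hm_pr 0 c
  have h1 := Hm_pr 1 c
  calc br (br a b) c = br (br a b) (pr 0 c + pr 1 c) := by rw [pr_decomp]
    _ = br (br a b) (pr 0 c) + br (br a b) (pr 1 c) := br_add_right _ _ _
    _ = (br a (br b (pr 0 c)) - ((-1 : ℤ) ^ (p.val * q.val)) • br b (br a (pr 0 c)))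
        + (br a (br b (pr 1 c)) - ((-1 : ℤ) ^ (p.val * q.val)) • br b (br a (pr 1 c))) := by
      rw [br_jacobi_homog ha hb h0, br_jacobi_homog ha hb h1]
    _ = br a (br b c) - ((-1 : ℤ) ^ (p.val * q.val)) • br b (br a c) := by
      conv_rhs => rw [← pr_decomp c]
      rw [br_add_right b, br_add_right a (br b (pr 0 c)), br_add_right a,
          br_add_right b (br a (pr 0 c)), smul_add]
      abel

/-- the Lie superring structure on the free associative superalgebra -/
noncomputable def T (ι : Type) : LieSuperringStruct (A ι) where
  bracket := br
  isHomog := Hm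
  add_left := br_add_left
  add_right := br_add_right
  isHomog_bracket := fun ha hb => Hm_br ha hb
  antisymm := fun ha hb => br_antisymm ha hb
  jacobi := fun c ha hb => br_jacobi c ha hb

end LamSAux
namespace LamSAux

variable {ι : Type} [DecidableEq ι]

noncomputable def yy (i : ι) : A ι := MonoidAlgebra.single (FreeMonoid.of i) 1

lemma Hm_yy (i : ι) : Hm 1 (yy i) := by
  intro w hw
  rw [yy, MonoidAlgebra.coeff_single] at hw
  have := Finsupp.support_single_subset hw
  simp only [Finset.mem_singleton] at this
  subst this
  rfl

noncomputable def Phi (z : ι) (l : List ι) : A ι :=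
  l.foldr (fun i acc => br (yy i) acc) (yy z)

lemma Hm_Phi (z : ι) (l : List ι) : Hm ((l.length + 1 : ℕ) : ZMod 2) (Phi z l) := by
  induction l with
  | nil => simpa [Phi] using Hm_yy z
  | cons i l ih =>
      have := Hm_br (Hm_yy i) ih
      have hcast : ((1 : ZMod 2) + ((l.length + 1 : ℕ) : ZMod 2)) =
          (((i :: l).length + 1 : ℕ) : ZMod 2) := by
        simp only [List.length_cons]
        push_cast
        ring
      rw [hcast] at this
      exact this

lemma ofList_eq_iff (s t : List ι) : FreeMonoid.ofList s = FreeMonoid.ofList t ↔ s = t :=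
  ⟨fun h => by simpa using congrArg FreeMonoid.toList h, fun h => by rw [h]⟩

lemma yy_mul_apply_cons (i : ι) (f : A ι) (t : List ι) :
    (yy i * f).coeff (FreeMonoid.ofList (i :: t)) = f.coeff (FreeMonoid.ofList t) := by
  rw [yy]
  rw [MonoidAlgebra.coeff_single_mul_eq_mul_coeff (x := f) (m := FreeMonoid.of i)
    (m₁ := FreeMonoid.ofList (i :: t)) (FreeMonoid.ofList t) ?_, one_mul]
  intro a _
  constructor
  · intro h
    have := congrArg FreeMonoid.toList h
    rw [FreeMonoid.toList_mul] at this
    simp only [FreeMonoid.toList_of, FreeMonoid.toList_ofList] at this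
    have : FreeMonoid.toList a = t := by
      simpa using this
    rw [← this]
    exact (FreeMonoid.ofList_toList a).symm
  · rintro rfl
    rfl

lemma yy_mul_apply_of_head_ne (i : ι) (f : A ι) (w : List ι)
    (h : w.head? ≠ some i) : (yy i * f).coeff (FreeMonoid.ofList w) = 0 := by
  rw [yy]
  apply MonoidAlgebra.single_mul_apply_of_not_exists_mul
  rintro ⟨d, hd⟩
  apply h
  have := congrArg FreeMonoid.toList hd
  rw [FreeMonoid.toList_mul] at this
  simp only [FreeMonoid.toList_of, FreeMonoid.toList_ofList] at this
  rw [this]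
  rfl

lemma mul_yy_apply_of_getLast_ne (f : A ι) (i : ι) (w : List ι)
    (h : w.getLast? ≠ some i) : (f * yy i).coeff (FreeMonoid.ofList w) = 0 := by
  rw [yy]
  apply MonoidAlgebra.mul_single_apply_of_not_exists_mul
  rintro ⟨d, hd⟩
  apply h
  have := congrArg FreeMonoid.toList hd
  rw [FreeMonoid.toList_mul] at this
  simp only [FreeMonoid.toList_of, FreeMonoid.toList_ofList] at this
  rw [this, List.getLast?_concat]

lemma coeff_Phi (z : ι) (l : List ι) (hz : z ∉ l) (m : List ι) :
    (Phi z l).coeff (FreeMonoid.ofList (m ++ [z])) = if m = l then 1 else 0 := by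
  classical
  induction l generalizing m with
  | nil =>
      simp only [Phi, List.foldr_nil, yy, MonoidAlgebra.coeff_single]
      rw [Finsupp.single_apply]
      have : (FreeMonoid.of z = FreeMonoid.ofList (m ++ [z])) ↔ m = [] := by
        rw [show FreeMonoid.of z = FreeMonoid.ofList [z] from rfl, ofList_eq_iff]
        constructor
        · intro h
          rcases m with _ | ⟨a, m⟩
          · rfl
          · exact absurd (congrArg List.length h) (by simp)
        · rintro rfl; rfl
      simp only [this]
  | cons i l ih =>
      have hzi : z ≠ i := fun h => hz (h ▸ List.mem_cons_self)
      have hzl : z ∉ l := fun h => hz (List.mem_cons_of_mem i h)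
      have hbr : Phi z (i :: l) = yy i * Phi z l -
          ((-1 : ℤ) ^ ((1 : ZMod 2).val * (((l.length + 1 : ℕ) : ZMod 2)).val)) •
            (Phi z l * yy i) := by
        have := br_homog_eq (Hm_yy i) (Hm_Phi z l)
        exact this
      rw [show Phi z (i :: l) = br (yy i) (Phi z l) from rfl] at *
      rw [hbr, MonoidAlgebra.coeff_sub, Finsupp.sub_apply, MonoidAlgebra.coeff_smul,
        Finsupp.smul_apply]
      have hlast : (Phi z l * yy i).coeff (FreeMonoid.ofList (m ++ [z])) = 0 := by
        apply mul_yy_apply_of_getLast_ne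
        rw [List.getLast?_concat]
        simp only [ne_eq, Option.some.injEq]
        exact hzi
      rw [hlast, smul_zero, sub_zero]
      rcases m with _ | ⟨j, m'⟩
      · rw [yy_mul_apply_of_head_ne i _ _ (by intro h; rw [List.nil_append, List.head?_cons, Option.some.injEq] at h; exact hzi h)]
        simp
      · rcases eq_or_ne j i with rfl | hj
        · rw [show (j :: m') ++ [z] = j :: (m' ++ [z]) from rfl, yy_mul_apply_cons, ih hzl]
          by_cases h : m' = l <;> simp [h]
        · rw [yy_mul_apply_of_head_ne i _ _ (by simpa using hj)]
          simp [hj]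

end LamSAux
namespace LamSAux

section Main

variable {L : Type} [AddCommGroup L] {n : ℕ} (S : LieSuperringStruct L) (x : Fin (n + 1) → L)

/-- right-normed bracket ending in the last generator -/
def brkt (l : List (Fin (n + 1))) : L :=
  l.foldr (fun i acc => S.bracket (x i) acc) (x (Fin.last n))

lemma lamS_eq_brkt (σ : Equiv.Perm (Fin n)) :
    lamS S x σ = brkt S x (List.ofFn fun i => Fin.castSucc (σ i)) := by
  unfold lamS brkt
  rw [show (List.ofFn fun i : Fin n => x (Fin.castSucc (σ i)))
      = (List.ofFn fun i => Fin.castSucc (σ i)).map x by rw [List.map_ofFn]; rfl,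
    List.foldr_map]

lemma isHomog_mono (hodd : ∀ i, S.isHomog 1 (x i)) {a : L} {s : Finset (Fin (n + 1))} (ha : IsSuperMono S x a s) :
    S.isHomog ((s.card : ℕ) : ZMod 2) a := by
  induction ha with
  | of i => simpa using hodd i
  | bracket hb hc hdis ihb ihc =>
      have := S.isHomog_bracket ihb ihc
      rwa [← Nat.cast_add, ← Finset.card_union_of_disjoint hdis] at this

/-- generators of the right-normed span: `s` is the set of non-last letters -/
def RGen (s : Finset (Fin (n + 1))) : Set L :=
  {a | ∃ l : List (Fin (n + 1)), l.Nodup ∧ Fin.last n ∉ l ∧ l.toFinset = s ∧ a = brkt S x l}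

def Rspan (s : Finset (Fin (n + 1))) : Submodule ℤ L := Submodule.span ℤ (RGen S x s)

/-- bracketing on the left as an additive map -/
def brHom (a : L) : L →+ L := AddMonoidHom.mk' (S.bracket a) (fun b c => S.add_right a b c)

lemma bracket_mem_Rspan (hodd : ∀ i, S.isHomog 1 (x i)) {a : L} {t : Finset (Fin (n + 1))} (ha : IsSuperMono S x a t) :
    ∀ s : Finset (Fin (n + 1)), Fin.last n ∉ t → Disjoint t s → Fin.last n ∉ s →
      ∀ w ∈ Rspan S x s, S.bracket a w ∈ Rspan S x (t ∪ s) := by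
  induction ha with
  | of i =>
      intro s hzt hdis hzs w hw
      have hi : i ∉ s := by
        have := Finset.disjoint_left.1 hdis (Finset.mem_singleton_self i)
        exact this
      refine Submodule.span_induction
        (p := fun w _ => S.bracket (x i) w ∈ Rspan S x ({i} ∪ s)) ?_ ?_ ?_ ?_ hw
      · rintro w ⟨l, hnd, hzl, hts, rfl⟩
        apply Submodule.subset_span
        refine ⟨i :: l, ?_, ?_, ?_, rfl⟩
        · rw [List.nodup_cons]
          exact ⟨fun h => hi (hts ▸ List.mem_toFinset.2 h), hnd⟩
        · intro h
          rcases List.mem_cons.1 h with h | h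
          · exact hzt (Finset.mem_singleton.2 h)
          · exact hzl h
        · rw [List.toFinset_cons, hts, Finset.insert_eq]
      · show S.bracket (x i) 0 ∈ Rspan S x ({i} ∪ s)
        have : S.bracket (x i) 0 = 0 := (brHom S (x i)).map_zero
        rw [this]; exact Submodule.zero_mem _
      · intro u v _ _ hu hv
        show S.bracket (x i) (u + v) ∈ Rspan S x ({i} ∪ s)
        rw [show S.bracket (x i) (u + v) = S.bracket (x i) u + S.bracket (x i) v from
          S.add_right _ _ _]
        exact Submodule.add_mem _ hu hv
      · intro k u _ hu
        show S.bracket (x i) (k • u) ∈ Rspan S x ({i} ∪ s)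
        rw [show S.bracket (x i) (k • u) = k • S.bracket (x i) u from
          (brHom S (x i)).map_zsmul k u]
        exact Submodule.smul_mem _ _ hu
  | @bracket b c t₁ t₂ hb hc hdis ihb ihc =>
      intro s hzt hdis2 hzs w hw
      have hzt₁ : Fin.last n ∉ t₁ := fun h => hzt (Finset.mem_union_left _ h)
      have hzt₂ : Fin.last n ∉ t₂ := fun h => hzt (Finset.mem_union_right _ h)
      rw [S.jacobi w (isHomog_mono S x hodd hb) (isHomog_mono S x hodd hc)]
      apply Submodule.sub_mem
      · have h1 : S.bracket c w ∈ Rspan S x (t₂ ∪ s) :=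
          ihc s hzt₂ (Finset.disjoint_union_left.1 hdis2).2 hzs w hw
        have h2 := ihb (t₂ ∪ s) hzt₁
          (Finset.disjoint_union_right.2 ⟨hdis, (Finset.disjoint_union_left.1 hdis2).1⟩)
          (fun h => (Finset.mem_union.1 h).elim hzt₂ hzs) _ h1
        rwa [Finset.union_assoc]
      · apply Submodule.smul_mem
        have h1 : S.bracket b w ∈ Rspan S x (t₁ ∪ s) :=
          ihb s hzt₁ (Finset.disjoint_union_left.1 hdis2).1 hzs w hw
        have h2 := ihc (t₁ ∪ s) hzt₂
          (Finset.disjoint_union_right.2 ⟨hdis.symm, (Finset.disjoint_union_left.1 hdis2).2⟩)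
          (fun h => (Finset.mem_union.1 h).elim hzt₁ hzs) _ h1
        rwa [← Finset.union_assoc, Finset.union_comm t₂ t₁] at h2

lemma mono_mem_Rspan (hodd : ∀ i, S.isHomog 1 (x i)) {a : L} {s : Finset (Fin (n + 1))} (ha : IsSuperMono S x a s) :
    Fin.last n ∈ s → a ∈ Rspan S x (s.erase (Fin.last n)) := by
  induction ha with
  | of i =>
      intro hz
      have : Fin.last n = i := Finset.mem_singleton.1 hz
      subst this
      rw [Finset.erase_singleton]
      apply Submodule.subset_span
      exact ⟨[], List.nodup_nil, List.not_mem_nil, List.toFinset_nil, rfl⟩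
  | @bracket b c t₁ t₂ hb hc hdis ihb ihc =>
      intro hz
      by_cases h2 : Fin.last n ∈ t₂
      · have hzb : Fin.last n ∉ t₁ := Finset.disjoint_right.1 hdis h2
        have hc' := ihc h2
        have := bracket_mem_Rspan S x hodd hb (t₂.erase (Fin.last n)) hzb
          (Finset.disjoint_of_subset_right (Finset.erase_subset _ _) hdis)
          (Finset.notMem_erase _ _) _ hc'
        rwa [show t₁ ∪ t₂.erase (Fin.last n) = (t₁ ∪ t₂).erase (Fin.last n) by
          rw [Finset.erase_union_distrib, Finset.erase_eq_of_notMem hzb]] at this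
      · have h1 : Fin.last n ∈ t₁ := (Finset.mem_union.1 hz).resolve_right h2
        rw [S.antisymm (isHomog_mono S x hodd hb) (isHomog_mono S x hodd hc)]
        apply Submodule.smul_mem
        have hzc : Fin.last n ∉ t₂ := h2
        have hb' := ihb h1
        have := bracket_mem_Rspan S x hodd hc (t₁.erase (Fin.last n)) hzc
          (Finset.disjoint_of_subset_right (Finset.erase_subset _ _) hdis.symm)
          (Finset.notMem_erase _ _) _ hb'
        rwa [show t₂ ∪ t₁.erase (Fin.last n) = (t₁ ∪ t₂).erase (Fin.last n) by
          rw [Finset.erase_union_distrib, Finset.erase_eq_of_notMem hzc,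
            Finset.union_comm]] at this

lemma brkt_isSuperMono (l : List (Fin (n + 1))) (hnd : l.Nodup) (hz : Fin.last n ∉ l) :
    IsSuperMono S x (brkt S x l) (l.toFinset ∪ {Fin.last n}) := by
  induction l with
  | nil =>
      simpa [brkt] using IsSuperMono.of (S := S) (x := x) (Fin.last n)
  | cons i l ih =>
      have hil : i ∉ l := (List.nodup_cons.1 hnd).1
      have hiz : i ≠ Fin.last n := fun h => hz (h ▸ List.mem_cons_self)
      have hmono := ih (List.nodup_cons.1 hnd).2 (fun h => hz (List.mem_cons_of_mem i h))
      have hdis : Disjoint ({i} : Finset (Fin (n + 1))) (l.toFinset ∪ {Fin.last n}) := by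
        simp only [Finset.disjoint_singleton_left, Finset.mem_union, Finset.mem_singleton,
          List.mem_toFinset]
        push_neg
        exact ⟨hil, hiz⟩
      have := IsSuperMono.bracket (IsSuperMono.of i) hmono hdis
      rwa [show ({i} : Finset (Fin (n+1))) ∪ (l.toFinset ∪ {Fin.last n})
          = (i :: l).toFinset ∪ {Fin.last n} by
        rw [List.toFinset_cons, Finset.insert_eq, Finset.union_assoc]] at this

end Main

end LamSAux
namespace LamSAux

section Main2

variable {L : Type} [AddCommGroup L] {n : ℕ} (S : LieSuperringStruct L) (x : Fin (n + 1) → L)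

lemma f_brkt (f : L →+ A (Fin (n + 1))) (hfx : ∀ i, f (x i) = yy i)
    (hfbr : ∀ a b : L, f (S.bracket a b) = (T (Fin (n + 1))).bracket (f a) (f b))
    (l : List (Fin (n + 1))) : f (brkt S x l) = Phi (Fin.last n) l := by
  induction l with
  | nil => exact hfx (Fin.last n)
  | cons i l ih =>
      show f (S.bracket (x i) (brkt S x l)) = br (yy i) (Phi (Fin.last n) l)
      rw [hfbr, hfx, ih]
      rfl

lemma last_not_mem_lst (σ : Equiv.Perm (Fin n)) :
    Fin.last n ∉ List.ofFn fun i => Fin.castSucc (σ i) := by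
  intro h
  rw [List.mem_ofFn] at h
  obtain ⟨k, hk⟩ := h
  exact (Fin.castSucc_lt_last (σ k)).ne hk

lemma lamS_linearIndependent (hfree : IsFreeOddLieSuperring S x) :
    LinearIndependent ℤ (lamS S x) := by
  classical
  obtain ⟨f, ⟨hfx, hfbr⟩, -⟩ := hfree.free (A (Fin (n + 1))) inferInstance
    (T (Fin (n + 1))) (fun i => yy i) (fun i => Hm_yy i)
  rw [Fintype.linearIndependent_iff]
  intro g hg τ
  set z := Fin.last n with hzdef
  set lst : Equiv.Perm (Fin n) → List (Fin (n + 1)) :=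
    fun σ => List.ofFn fun i => Fin.castSucc (σ i) with hlst
  have hf : ∀ σ, f (lamS S x σ) = Phi z (lst σ) := by
    intro σ
    rw [lamS_eq_brkt]
    exact f_brkt S x f hfx hfbr _
  have h0 := congrArg f hg
  rw [map_sum, map_zero] at h0
  simp only [map_zsmul, hf] at h0
  have h1 : ∑ σ : Equiv.Perm (Fin n),
      g σ • ((Phi z (lst σ)).coeff (FreeMonoid.ofList (lst τ ++ [z]))) = 0 := by
    have h2 := congrArg (fun v : A (Fin (n + 1)) => v.coeff (FreeMonoid.ofList (lst τ ++ [z]))) h0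
    rw [MonoidAlgebra.coeff_sum, Finset.sum_apply'] at h2
    simp only [MonoidAlgebra.coeff_smul, MonoidAlgebra.coeff_zero, Finsupp.smul_apply,
      Finsupp.zero_apply] at h2
    exact h2
  have hcoeff : ∀ σ : Equiv.Perm (Fin n),
      (Phi z (lst σ)).coeff (FreeMonoid.ofList (lst τ ++ [z])) = if σ = τ then 1 else 0 := by
    intro σ
    rw [coeff_Phi z (lst σ) (last_not_mem_lst σ) (lst τ)]
    congr 1
    rw [eq_iff_iff]
    constructor
    · intro h
      have h2 := List.ofFn_injective h
      ext k
      have := congrFun h2 k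
      exact Fin.castSucc_injective n this |>.symm ▸ rfl
    · rintro rfl; rfl
  simp only [hcoeff, smul_eq_mul, mul_ite, mul_one, mul_zero] at h1
  rwa [Finset.sum_ite_eq' Finset.univ τ g, if_pos (Finset.mem_univ τ)] at h1

lemma lamS_span (hfree : IsFreeOddLieSuperring S x) :
    Submodule.span ℤ (Set.range (lamS S x)) = SuperN S x := by
  classical
  apply le_antisymm
  · rw [Submodule.span_le]
    rintro _ ⟨σ, rfl⟩
    apply Submodule.subset_span
    rw [lamS_eq_brkt]
    have hnd : (List.ofFn fun i => Fin.castSucc (σ i)).Nodup :=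
      List.nodup_ofFn.2 ((Fin.castSucc_injective n).comp σ.injective)
    have hmono := brkt_isSuperMono S x _ hnd (last_not_mem_lst σ)
    have huniv : (List.ofFn fun i => Fin.castSucc (σ i)).toFinset ∪ {Fin.last n}
        = Finset.univ := by
      ext j
      simp only [Finset.mem_union, Finset.mem_singleton, List.mem_toFinset, List.mem_ofFn,
        Finset.mem_univ, iff_true]
      rcases Fin.eq_castSucc_or_eq_last j with ⟨k, rfl⟩ | rfl
      · exact Or.inl ⟨σ.symm k, by simp⟩
      · exact Or.inr rfl
    rw [huniv] at hmono
    exact hmono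
  · rw [SuperN, Submodule.span_le]
    intro a ha
    have h1 := mono_mem_Rspan S x hfree.odd ha (Finset.mem_univ _)
    refine Submodule.span_le.2 ?_ h1
    rintro _ ⟨l, hnd, hzl, hts, rfl⟩
    have hlen : l.length = n := by
      have h2 : l.toFinset.card = l.length := List.toFinset_card_of_nodup hnd
      rw [hts, Finset.card_erase_of_mem (Finset.mem_univ _), Finset.card_univ,
        Fintype.card_fin] at h2
      omega
    have hne : ∀ k : Fin n, l.get (Fin.cast hlen.symm k) ≠ Fin.last n := by
      intro k h
      exact hzl (h ▸ List.get_mem l _)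
    set g : Fin n → Fin n := fun k => (l.get (Fin.cast hlen.symm k)).castPred (hne k)
      with hgdef
    have hginj : Function.Injective g := by
      intro k₁ k₂ h
      have h2 : l.get (Fin.cast hlen.symm k₁) = l.get (Fin.cast hlen.symm k₂) := by
        have := congrArg Fin.castSucc h
        rwa [hgdef, Fin.castSucc_castPred, Fin.castSucc_castPred] at this
      have h3 := List.nodup_iff_injective_get.1 hnd h2
      exact Fin.cast_injective _ h3
    set σ : Equiv.Perm (Fin n) := Equiv.ofBijective g
      ((Finite.injective_iff_bijective).1 hginj) with hσdef
    refine Submodule.subset_span ⟨σ, ?_⟩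
    rw [lamS_eq_brkt]
    congr 1
    apply List.ext_get (by simp [hlen])
    intro k h1 h2
    rw [List.get_ofFn]
    show Fin.castSucc (g _) = _
    rw [hgdef]
    simp only [Fin.castSucc_castPred]
    congr 1
  
end Main2

end LamSAux

/-- the left-regulated super-Lie brackets `λ_σ`, for `σ` a permutation of
the first `n` of the `n+1` odd generators, form a ℤ-basis of the multilinear part
`𝔖_{n+1}` of the free Lie superalgebra on odd generators. -/
theorem lamS_basis_of_superN {L : Type} [AddCommGroup L] {n : ℕ}
    (S : LieSuperringStruct L) (x : Fin (n + 1) → L)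
    (hfree : IsFreeOddLieSuperring S x) :
    LinearIndependent ℤ (lamS S x) ∧
      Submodule.span ℤ (Set.range (lamS S x)) = SuperN S x :=
  ⟨LamSAux.lamS_linearIndependent S x hfree, LamSAux.lamS_span S x hfree⟩
end

section
/- If a finite group acts by simplicial automorphisms (isometries) on a finite tree, then the fixed-point set is nonempty and contractible (it is a subtree). -/
open Function

/-- The geometric realization of a (simple) graph `G` on a finite vertex set: convex
combinations of vertices supported either on a single vertex or on the two endpoints of
an edge. -/
def GraphRealization {V : Type} [Fintype V] (G : SimpleGraph V) : Type :=
  {f : V → ℝ // (∀ v, 0 ≤ f v) ∧ (∑ v, f v = 1) ∧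
    ∃ u w : V, (u = w ∨ G.Adj u w) ∧ Function.support f ⊆ {u, w}}

instance {V : Type} [Fintype V] (G : SimpleGraph V) :
    TopologicalSpace (GraphRealization G) :=
  instTopologicalSpaceSubtype

open Finset

namespace TreeFix

section TreePart
variable {V : Type} [Fintype V] (G : SimpleGraph V)

open scoped Classical

/-- degree of `v` within the vertex set `S`. -/
noncomputable def tdeg (S : Finset V) (v : V) : ℕ := (S.filter (fun w => G.Adj v w)).card

/-- `S` is connected within `G`. -/
def TConn (S : Finset V) : Prop :=
  ∀ x ∈ S, ∀ y ∈ S, ∃ p : G.Walk x y, ∀ z ∈ p.support, z ∈ S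

variable {G}

lemma tdeg_pos {S : Finset V} (hc : TConn G S) (h2 : 2 ≤ S.card) {v : V} (hv : v ∈ S) :
    1 ≤ tdeg G S v := by
  obtain ⟨w, hw, hwv⟩ : ∃ w ∈ S, w ≠ v := by
    obtain ⟨a, ha, b, hb, hab⟩ := Finset.one_lt_card.mp h2
    rcases eq_or_ne a v with rfl | h
    · exact ⟨b, hb, fun h => hab h.symm⟩
    · exact ⟨a, ha, h⟩
  obtain ⟨p, hp⟩ := hc v hv w hw
  cases p with
  | nil => exact absurd rfl hwv.symm
  | cons h q =>
    have hm : _ ∈ S.filter (fun w => G.Adj v w) :=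
      Finset.mem_filter.mpr ⟨hp _ (by simp [SimpleGraph.Walk.support_cons]), h⟩
    exact Finset.card_pos.mpr ⟨_, hm⟩

/-- walk lifting into the induced graph -/
lemma lift_walk {S : Finset V} :
    ∀ {x y : V} (p : G.Walk x y), (∀ z ∈ p.support, z ∈ S) →
      ∀ (hx : x ∈ (S : Set V)) (hy : y ∈ (S : Set V)),
      Nonempty ((G.induce (S : Set V)).Walk ⟨x, hx⟩ ⟨y, hy⟩) := by
  intro x y p
  induction p with
  | nil => intro _ hx hy; exact ⟨SimpleGraph.Walk.nil⟩
  | @cons a b c h q ih =>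
    intro hs hx hy
    have hb : b ∈ (S : Set V) := by
      simpa using hs b (by simp [SimpleGraph.Walk.support_cons])
    obtain ⟨q'⟩ := ih (fun z hz => hs z (by simp [SimpleGraph.Walk.support_cons, hz])) hb hy
    exact ⟨SimpleGraph.Walk.cons (by simpa using h) q'⟩

lemma induce_isTree (hG : G.IsTree) {S : Finset V} (hc : TConn G S) (hne : S.Nonempty) :
    (G.induce (S : Set V)).IsTree := by
  constructor
  · rw [SimpleGraph.connected_iff]
    constructor
    · rintro ⟨x, hx⟩ ⟨y, hy⟩
      obtain ⟨p, hp⟩ := hc x (by simpa using hx) y (by simpa using hy)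
      obtain ⟨q⟩ := lift_walk p hp hx hy
      exact ⟨q⟩
    · exact ⟨⟨hne.choose, by simpa using hne.choose_spec⟩⟩
  · intro x c hc'
    exact hG.IsAcyclic _ (hc'.map (f := (SimpleGraph.Embedding.induce (S : Set V)).toHom)
      Subtype.val_injective)

lemma sum_tdeg (hG : G.IsTree) {S : Finset V} (hc : TConn G S) (hne : S.Nonempty) :
    ∑ v ∈ S, tdeg G S v = 2 * (S.card - 1) := by
  have htree := induce_isTree hG hc hne
  have hedge := htree.card_edgeFinset
  have hdeg : ∀ x : (S : Set V), (G.induce (S : Set V)).degree x = tdeg G S x.1 := by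
    intro x
    rw [SimpleGraph.degree, tdeg]
    refine Finset.card_bij (fun y _ => y.1) ?_ ?_ ?_
    · intro y hy
      rw [SimpleGraph.mem_neighborFinset] at hy
      exact Finset.mem_filter.mpr ⟨by simpa using y.2, hy⟩
    · intro a _ b _ hab; exact Subtype.ext hab
    · intro w hw
      rw [Finset.mem_filter] at hw
      exact ⟨⟨w, by simpa using hw.1⟩, by rw [SimpleGraph.mem_neighborFinset]; exact hw.2, rfl⟩
  have hsum := SimpleGraph.sum_degrees_eq_twice_card_edges (G.induce (S : Set V))
  have : ∑ v ∈ S, tdeg G S v = ∑ x : (S : Set V), (G.induce (S : Set V)).degree x := by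
    rw [← Finset.sum_coe_sort S (tdeg G S)]
    exact Finset.sum_congr rfl (fun x _ => (hdeg x).symm)
  rw [this, hsum]
  rw [Fintype.card_eq_nat_card] at hedge
  simp only [Nat.card_coe_set_eq, Set.ncard_coe_finset] at hedge
  omega

lemma exists_leaf (hG : G.IsTree) {S : Finset V} (hc : TConn G S) (h2 : 2 ≤ S.card) :
    ∃ v ∈ S, tdeg G S v ≤ 1 := by
  by_contra h
  push_neg at h
  have : 2 * S.card ≤ ∑ v ∈ S, tdeg G S v := by
    calc 2 * S.card = ∑ _v ∈ S, 2 := by rw [Finset.sum_const]; ring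
    _ ≤ _ := Finset.sum_le_sum (fun v hv => h v hv)
  rw [sum_tdeg hG hc (Finset.card_pos.mp (by omega))] at this
  omega

lemma exists_nonleaf (hG : G.IsTree) {S : Finset V} (hc : TConn G S) (h3 : 3 ≤ S.card) :
    ∃ v ∈ S, 2 ≤ tdeg G S v := by
  by_contra h
  push_neg at h
  have : ∑ v ∈ S, tdeg G S v ≤ ∑ _v ∈ S, 1 :=
    Finset.sum_le_sum (fun v hv => Nat.lt_succ_iff.mp (h v hv))
  rw [sum_tdeg hG hc (Finset.card_pos.mp (by omega)), Finset.sum_const, smul_eq_mul,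
    mul_one] at this
  omega

end TreePart

section MoreTree
variable {V : Type} [Fintype V] {G : SimpleGraph V}

open scoped Classical in
lemma path_interior {S : Finset V} :
    ∀ {x y : V} (p : G.Walk x y), p.IsPath → (∀ z ∈ p.support, z ∈ S) →
      ∀ z ∈ p.support, z = x ∨ z = y ∨ 2 ≤ tdeg G S z := by
  intro x y p
  induction p with
  | nil => intro _ _ z hz; left; simpa using hz
  | @cons a b c h q ih =>
    intro hp hs z hz
    rw [SimpleGraph.Walk.support_cons, List.mem_cons] at hz
    rcases hz with rfl | hz
    · exact Or.inl rfl
    have hq := hp.of_cons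
    have hsq : ∀ w ∈ q.support, w ∈ S := fun w hw =>
      hs w (by simp [SimpleGraph.Walk.support_cons, hw])
    rcases ih hq hsq z hz with rfl | h' | h'
    · -- z = b : need b = c or 2 ≤ tdeg
      cases q with
      | nil => exact Or.inr (Or.inl rfl)
      | @cons _ d _ h2 q2 =>
        right; right
        have hd : d ∈ S := hsq d (by simp [SimpleGraph.Walk.support_cons])
        have ha : a ∈ S := hs a (by simp [SimpleGraph.Walk.support_cons])
        have had : a ≠ d := by
          intro hEq
          have : a ∈ (SimpleGraph.Walk.cons h2 q2).support := by
            rw [hEq]; simp [SimpleGraph.Walk.support_cons]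
          exact (SimpleGraph.Walk.cons_isPath_iff h _).mp hp |>.2 this
        have hsub : ({a, d} : Finset V) ⊆ S.filter (fun w => G.Adj z w) := by
          intro w hw
          rcases Finset.mem_insert.mp hw with rfl | hw
          · exact Finset.mem_filter.mpr ⟨ha, h.symm⟩
          · rw [Finset.mem_singleton] at hw; subst hw
            exact Finset.mem_filter.mpr ⟨hd, h2⟩
        calc 2 = ({a, d} : Finset V).card := by rw [Finset.card_insert_of_notMem (by simpa using had), Finset.card_singleton]
        _ ≤ _ := Finset.card_le_card hsub
    · exact Or.inr (Or.inl h')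
    · exact Or.inr (Or.inr h')

open scoped Classical in
lemma tconn_filter (hc : TConn G S) :
    TConn G (S.filter (fun v => 2 ≤ tdeg G S v)) := by
  intro x hx y hy
  have hxS := (Finset.mem_filter.mp hx).1
  have hyS := (Finset.mem_filter.mp hy).1
  obtain ⟨p, hp⟩ := hc x hxS y hyS
  refine ⟨p.toPath, fun z hz => ?_⟩
  have hzs : z ∈ p.support := SimpleGraph.Walk.support_toPath_subset p hz
  have hzS : ∀ w ∈ (p.toPath : G.Walk x y).support, w ∈ S := fun w hw =>
    hp w (SimpleGraph.Walk.support_toPath_subset p hw)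
  rcases path_interior (p.toPath : G.Walk x y) p.toPath.2 hzS z hz with rfl | rfl | h'
  · exact hx
  · exact hy
  · exact Finset.mem_filter.mpr ⟨hp z hzs, h'⟩

lemma walk_confined {S : Finset V} {u w : V} (hu : ∀ z ∈ S, G.Adj u z → z = w)
    (hw : ∀ z ∈ S, G.Adj w z → z = u) :
    ∀ {x t : V} (p : G.Walk x t), (∀ z ∈ p.support, z ∈ S) → (x = u ∨ x = w) →
      ∀ z ∈ p.support, (z = u ∨ z = w) := by
  intro x t p
  induction p with
  | nil => intro _ hx z hz; rw [SimpleGraph.Walk.support_nil] at hz; simpa [List.mem_singleton.mp hz]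
  | @cons a b c h q ih =>
    intro hs hx z hz
    rw [SimpleGraph.Walk.support_cons, List.mem_cons] at hz
    rcases hz with rfl | hz
    · exact hx
    have hb : b ∈ S := hs b (by simp [SimpleGraph.Walk.support_cons])
    have hbu : b = u ∨ b = w := by
      rcases hx with rfl | rfl
      · exact Or.inr (hu b hb h)
      · exact Or.inl (hw b hb h)
    exact ih (fun z hz => hs z (by simp [SimpleGraph.Walk.support_cons, hz])) hbu z hz

open scoped Classical in
lemma both_die (hc : TConn G S) (h3 : 3 ≤ S.card) {u w : V} (hu : u ∈ S) (hw : w ∈ S)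
    (hadj : G.Adj u w) (hdu : tdeg G S u ≤ 1) (hdw : tdeg G S w ≤ 1) : False := by
  have hfu : ∀ z ∈ S, G.Adj u z → z = w := by
    intro z hz hzadj
    have h1 : z ∈ S.filter (fun t => G.Adj u t) := Finset.mem_filter.mpr ⟨hz, hzadj⟩
    have h2 : w ∈ S.filter (fun t => G.Adj u t) := Finset.mem_filter.mpr ⟨hw, hadj⟩
    exact Finset.card_le_one.mp hdu _ h1 _ h2
  have hfw : ∀ z ∈ S, G.Adj w z → z = u := by
    intro z hz hzadj
    have h1 : z ∈ S.filter (fun t => G.Adj w t) := Finset.mem_filter.mpr ⟨hz, hzadj⟩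
    have h2 : u ∈ S.filter (fun t => G.Adj w t) := Finset.mem_filter.mpr ⟨hu, hadj.symm⟩
    exact Finset.card_le_one.mp hdw _ h1 _ h2
  obtain ⟨z, hzmem⟩ : (S \ {u, w}).Nonempty := by
    rw [← Finset.card_pos]
    have : ({u, w} : Finset V).card ≤ 2 := Finset.card_insert_le _ _ |>.trans (by simp)
    have := Finset.card_le_card_sdiff_add_card (s := S) (t := ({u, w} : Finset V))
    omega
  rw [Finset.mem_sdiff] at hzmem
  obtain ⟨hzS, hznot⟩ := hzmem
  obtain ⟨p, hp⟩ := hc u hu z hzS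
  have := walk_confined hfu hfw p hp (Or.inl rfl) z (SimpleGraph.Walk.end_mem_support p)
  simp only [Finset.mem_insert, Finset.mem_singleton] at hznot
  tauto

end MoreTree

section VsetPart
variable {V : Type} [Fintype V] (G : SimpleGraph V)

open scoped Classical in
noncomputable def Vset : ℕ → Finset V
  | 0 => Finset.univ
  | k+1 =>
    if 3 ≤ (Vset k).card then (Vset k).filter (fun v => 2 ≤ tdeg G (Vset k) v) else Vset k

variable {G}

lemma vset_subset (k : ℕ) : Vset G (k+1) ⊆ Vset G k := by
  rw [Vset]
  split_ifs with h
  · exact Finset.filter_subset _ _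
  · exact subset_rfl

lemma vset_good (hG : G.IsTree) : ∀ k, TConn G (Vset G k) ∧ (Vset G k).Nonempty := by
  intro k
  induction k with
  | zero =>
    constructor
    · intro x _ y _
      obtain ⟨p⟩ := hG.isConnected.preconnected x y
      exact ⟨p, fun z _ => Finset.mem_univ z⟩
    · have := hG.isConnected.nonempty
      exact Finset.univ_nonempty
  | succ k ih =>
    rw [Vset]
    split_ifs with h3
    · refine ⟨tconn_filter ih.1, ?_⟩
      obtain ⟨v, hv, h2⟩ := exists_nonleaf hG ih.1 h3
      exact ⟨v, Finset.mem_filter.mpr ⟨hv, h2⟩⟩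
    · exact ih

lemma vset_card_le (hG : G.IsTree) (k : ℕ) :
    (Vset G k).card ≤ 2 ∨ (Vset G k).card + k ≤ Fintype.card V := by
  induction k with
  | zero => right; simpa using Finset.card_le_univ _
  | succ k ih =>
    by_cases h3 : 3 ≤ (Vset G k).card
    · right
      have hlt : (Vset G (k+1)).card < (Vset G k).card := by
        obtain ⟨v, hv, h1⟩ := exists_leaf hG (vset_good hG k).1 (by omega)
        apply Finset.card_lt_card
        rw [Vset, if_pos h3]
        refine ⟨Finset.filter_subset _ _, fun hsub => ?_⟩
        have := Finset.mem_filter.mp (hsub hv)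
        omega
      omega
    · left
      rw [Vset, if_neg h3]; omega

lemma vset_center (hG : G.IsTree) :
    (Vset G (Fintype.card V)).card ≤ 2 := by
  rcases vset_card_le hG (Fintype.card V) with h | h
  · exact h
  · have := (vset_good hG (Fintype.card V)).2
    rw [← Finset.card_pos] at this
    omega

end VsetPart

section EquivPart
variable {V : Type} [Fintype V] {G : SimpleGraph V} {Γ : Type} [Group Γ]
  {φ : Γ →* Equiv.Perm V}

lemma adj_iff (hφ : ∀ (γ : Γ) (u w : V), G.Adj u w → G.Adj (φ γ u) (φ γ w))
    (γ : Γ) (u w : V) : G.Adj (φ γ u) (φ γ w) ↔ G.Adj u w := by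
  refine ⟨fun h => ?_, hφ γ u w⟩
  have := hφ γ⁻¹ _ _ h
  simpa [← Equiv.Perm.mul_apply, ← map_mul] using this

open scoped Classical in
lemma tdeg_equiv (hφ : ∀ (γ : Γ) (u w : V), G.Adj u w → G.Adj (φ γ u) (φ γ w))
    {S : Finset V} (γ : Γ) (hS : ∀ v, φ γ v ∈ S ↔ v ∈ S) (v : V) :
    tdeg G S (φ γ v) = tdeg G S v := by
  unfold tdeg
  refine (Finset.card_bij' (fun w _ => φ γ⁻¹ w) (fun w _ => φ γ w) ?_ ?_ ?_ ?_).symm.symm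
  all_goals intro w hw
  · rw [Finset.mem_filter] at hw ⊢
    constructor
    · rw [← hS]; simpa [← Equiv.Perm.mul_apply, ← map_mul, -Equiv.Perm.coe_mul, -map_inv] using hw.1
    · have := (adj_iff hφ γ⁻¹ (φ γ v) w).mpr hw.2
      simpa [← Equiv.Perm.mul_apply, ← map_mul, -Equiv.Perm.coe_mul, -map_inv] using this
  · rw [Finset.mem_filter] at hw ⊢
    exact ⟨(hS w).mpr hw.1, hφ γ _ _ hw.2⟩
  · simp [← Equiv.Perm.mul_apply, ← map_mul, -Equiv.Perm.coe_mul, -map_inv]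
  · simp [← Equiv.Perm.mul_apply, ← map_mul, -Equiv.Perm.coe_mul, -map_inv]

lemma vset_inv (hφ : ∀ (γ : Γ) (u w : V), G.Adj u w → G.Adj (φ γ u) (φ γ w)) :
    ∀ (k : ℕ) (γ : Γ) (v : V), φ γ v ∈ Vset G k ↔ v ∈ Vset G k := by
  intro k
  induction k with
  | zero => intro γ v; simp [Vset]
  | succ k ih =>
    intro γ v
    rw [Vset]
    split_ifs with h3
    · rw [Finset.mem_filter, Finset.mem_filter, ih γ v, tdeg_equiv hφ γ (ih γ) v]
    · exact ih γ v

end EquivPart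

section PkPart
variable {V : Type} [Fintype V] (G : SimpleGraph V)

open scoped Classical in
noncomputable def pk (k : ℕ) (u : V) : V :=
  if h : ((Vset G k).filter (fun w => G.Adj u w)).Nonempty then h.choose else u

open scoped Classical in
noncomputable def Dset (k : ℕ) : Finset V := Vset G k \ Vset G (k+1)

variable {G}

open scoped Classical in
lemma mem_Dset {k : ℕ} {u : V} :
    u ∈ Dset G k ↔ (3 ≤ (Vset G k).card ∧ u ∈ Vset G k ∧ tdeg G (Vset G k) u ≤ 1) := by
  rw [Dset, Finset.mem_sdiff]
  rw [show Vset G (k+1) = if 3 ≤ (Vset G k).card then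
    (Vset G k).filter (fun v => 2 ≤ tdeg G (Vset G k) v) else Vset G k from rfl]
  split_ifs with h3
  · rw [Finset.mem_filter]
    constructor
    · rintro ⟨hu, hn⟩
      refine ⟨h3, hu, ?_⟩
      by_contra hc
      exact hn ⟨hu, by omega⟩
    · rintro ⟨_, hu, hd⟩
      exact ⟨hu, fun hmem => by omega⟩
  · constructor
    · rintro ⟨hu, hn⟩; exact absurd hu hn
    · rintro ⟨h3', _, _⟩; omega

open scoped Classical in
lemma pk_filter_eq (hG : G.IsTree) {k : ℕ} {u : V} (hu : u ∈ Dset G k) :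
    (Vset G k).filter (fun w => G.Adj u w) = {pk G k u} := by
  obtain ⟨h3, huS, hd⟩ := mem_Dset.mp hu
  have h1 : 1 ≤ tdeg G (Vset G k) u :=
    tdeg_pos (vset_good hG k).1 (by omega) huS
  have hcard : ((Vset G k).filter (fun w => G.Adj u w)).card = 1 := by
    unfold tdeg at hd h1; omega
  obtain ⟨a, ha⟩ := Finset.card_eq_one.mp hcard
  have hne : ((Vset G k).filter (fun w => G.Adj u w)).Nonempty := ⟨a, by simp [ha]⟩
  have hmem : pk G k u ∈ (Vset G k).filter (fun w => G.Adj u w) := by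
    rw [pk, dif_pos hne]; exact hne.choose_spec
  rw [ha, Finset.mem_singleton] at hmem
  rw [ha, hmem]

open scoped Classical in
lemma pk_mem_vset (hG : G.IsTree) {k : ℕ} {u : V} (hu : u ∈ Dset G k) :
    pk G k u ∈ Vset G k := by
  have := pk_filter_eq hG hu
  have : pk G k u ∈ (Vset G k).filter (fun w => G.Adj u w) := by rw [this]; simp
  exact (Finset.mem_filter.mp this).1

open scoped Classical in
lemma pk_adj (hG : G.IsTree) {k : ℕ} {u : V} (hu : u ∈ Dset G k) :
    G.Adj u (pk G k u) := by
  have h := pk_filter_eq hG hu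
  have : pk G k u ∈ (Vset G k).filter (fun w => G.Adj u w) := by rw [h]; simp
  exact (Finset.mem_filter.mp this).2

open scoped Classical in
lemma pk_unique (hG : G.IsTree) {k : ℕ} {u w : V} (hu : u ∈ Dset G k)
    (hw : w ∈ Vset G k) (hadj : G.Adj u w) : w = pk G k u := by
  have h := pk_filter_eq hG hu
  have : w ∈ (Vset G k).filter (fun t => G.Adj u t) := Finset.mem_filter.mpr ⟨hw, hadj⟩
  rw [h, Finset.mem_singleton] at this
  exact this

open scoped Classical in
lemma pk_mem_next (hG : G.IsTree) {k : ℕ} {u : V} (hu : u ∈ Dset G k) :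
    pk G k u ∈ Vset G (k+1) := by
  by_contra hn
  have hpkD : pk G k u ∈ Dset G k :=
    Finset.mem_sdiff.mpr ⟨pk_mem_vset hG hu, hn⟩
  obtain ⟨h3, huS, hdu⟩ := mem_Dset.mp hu
  obtain ⟨_, hpkS, hdpk⟩ := mem_Dset.mp hpkD
  exact both_die (vset_good hG k).1 h3 huS hpkS (pk_adj hG hu) hdu hdpk

open scoped Classical in
lemma dset_inv {Γ : Type} [Group Γ] {φ : Γ →* Equiv.Perm V}
    (hφ : ∀ (γ : Γ) (u w : V), G.Adj u w → G.Adj (φ γ u) (φ γ w))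
    {k : ℕ} (γ : Γ) (u : V) : φ γ u ∈ Dset G k ↔ u ∈ Dset G k := by
  rw [Dset, Finset.mem_sdiff, Finset.mem_sdiff, vset_inv hφ k, vset_inv hφ (k+1)]

open scoped Classical in
lemma pk_equiv (hG : G.IsTree) {Γ : Type} [Group Γ] {φ : Γ →* Equiv.Perm V}
    (hφ : ∀ (γ : Γ) (u w : V), G.Adj u w → G.Adj (φ γ u) (φ γ w))
    {k : ℕ} (γ : Γ) {u : V} (hu : u ∈ Dset G k) :
    pk G k (φ γ u) = φ γ (pk G k u) := by
  have hγu : φ γ u ∈ Dset G k := (dset_inv hφ γ u).mpr hu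
  have : φ γ (pk G k u) ∈ (Vset G k).filter (fun w => G.Adj (φ γ u) w) :=
    Finset.mem_filter.mpr ⟨(vset_inv hφ k γ _).mpr (pk_mem_vset hG hu),
      hφ γ _ _ (pk_adj hG hu)⟩
  rw [pk_filter_eq hG hγu, Finset.mem_singleton] at this
  exact this.symm

end PkPart

section StepPart
variable {V : Type} [Fintype V] (G : SimpleGraph V)

open scoped Classical in
noncomputable def stepf (k : ℕ) (f : V → ℝ) : V → ℝ := fun v =>
  (if v ∈ Dset G k then 0 else f v) +
    ∑ u ∈ (Dset G k).filter (fun u => pk G k u = v), f u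

noncomputable def collapse : ℕ → (V → ℝ) → (V → ℝ)
  | 0 => id
  | k+1 => fun f => stepf G k (collapse k f)

/-- support is confined to an "edge" of `S`. -/
def EdgeSupp (S : Finset V) (f : V → ℝ) : Prop :=
  ∃ u w, u ∈ S ∧ w ∈ S ∧ (u = w ∨ G.Adj u w) ∧ ∀ v, f v ≠ 0 → v = u ∨ v = w

variable {G}

open scoped Classical in
lemma stepf_nonneg {k : ℕ} {f : V → ℝ} (hf : ∀ v, 0 ≤ f v) (v : V) :
    0 ≤ stepf G k f v := by
  refine add_nonneg ?_ (Finset.sum_nonneg fun u _ => hf u)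
  split_ifs
  · exact le_refl 0
  · exact hf v

open scoped Classical in
lemma stepf_sum {k : ℕ} (f : V → ℝ) :
    ∑ v, stepf G k f v = ∑ v, f v := by
  unfold stepf
  rw [Finset.sum_add_distrib]
  have h1 : ∑ v, (if v ∈ Dset G k then (0:ℝ) else f v)
      = ∑ v, f v - ∑ u ∈ Dset G k, f u := by
    have he : ∀ v : V, (if v ∈ Dset G k then (0:ℝ) else f v)
        = f v - (if v ∈ Dset G k then f v else 0) := by
      intro v; split_ifs <;> ring
    rw [Finset.sum_congr rfl (fun v _ => he v), Finset.sum_sub_distrib,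
      Finset.sum_ite_mem, Finset.univ_inter]
  have h2 : ∑ v, ∑ u ∈ (Dset G k).filter (fun u => pk G k u = v), f u
      = ∑ u ∈ Dset G k, f u :=
    Finset.sum_fiberwise_of_maps_to (fun u _ => Finset.mem_univ _) f
  rw [h1, h2]; ring

open scoped Classical in
lemma stepf_inv {Γ : Type} [Group Γ] {φ : Γ →* Equiv.Perm V} (hG : G.IsTree)
    (hφ : ∀ (γ : Γ) (u w : V), G.Adj u w → G.Adj (φ γ u) (φ γ w))
    {k : ℕ} {f : V → ℝ} (hf : ∀ γ v, f (φ γ v) = f v) (γ : Γ) (v : V) :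
    stepf G k f (φ γ v) = stepf G k f v := by
  unfold stepf
  congr 1
  · rcases Classical.em (v ∈ Dset G k) with h | h
    · rw [if_pos h, if_pos ((dset_inv hφ γ v).mpr h)]
    · rw [if_neg h, if_neg (fun hc => h ((dset_inv hφ γ v).mp hc)), hf]
  · refine Finset.sum_nbij' (fun u => φ γ⁻¹ u) (fun u => φ γ u) ?_ ?_ ?_ ?_ ?_
    · intro u hu
      rw [Finset.mem_filter] at hu ⊢
      obtain ⟨huD, hpk⟩ := hu
      have hD : φ γ⁻¹ u ∈ Dset G k := by
        have := (dset_inv hφ γ⁻¹ u).mpr huD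
        exact this
      refine ⟨hD, ?_⟩
      have := pk_equiv hG hφ γ hD
      have h2 : φ γ (φ γ⁻¹ u) = u := by
        simp [← Equiv.Perm.mul_apply, ← map_mul, -Equiv.Perm.coe_mul, -map_inv]
      rw [h2] at this
      rw [hpk] at this
      have := congrArg (φ γ⁻¹) this
      simpa [← Equiv.Perm.mul_apply, ← map_mul, -Equiv.Perm.coe_mul, -map_inv] using this.symm
    · intro u hu
      rw [Finset.mem_filter] at hu ⊢
      obtain ⟨huD, hpk⟩ := hu
      refine ⟨(dset_inv hφ γ u).mpr huD, ?_⟩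
      rw [pk_equiv hG hφ γ huD, hpk]
    · intro u _; simp [← Equiv.Perm.mul_apply, ← map_mul, -Equiv.Perm.coe_mul, -map_inv]
    · intro u _; simp [← Equiv.Perm.mul_apply, ← map_mul, -Equiv.Perm.coe_mul, -map_inv]
    · intro u _; rw [← hf γ⁻¹ u]

lemma mem_next_of_not_dset {k : ℕ} {u : V} (hu : u ∈ Vset G k) (hd : u ∉ Dset G k) :
    u ∈ Vset G (k+1) := by
  classical
  rw [Dset, Finset.mem_sdiff] at hd
  tauto

open scoped Classical in
lemma stepf_zero_of_dset (hG : G.IsTree) {k : ℕ} {f : V → ℝ} {v : V}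
    (hv : v ∈ Dset G k) : stepf G k f v = 0 := by
  unfold stepf
  rw [if_pos hv, zero_add]
  refine Finset.sum_eq_zero fun x hx => ?_
  rw [Finset.mem_filter] at hx
  exfalso
  have h1 := pk_mem_next hG hx.1
  rw [hx.2] at h1
  rw [Dset, Finset.mem_sdiff] at hv
  exact hv.2 h1

open scoped Classical in
lemma stepf_supp (hG : G.IsTree) {k : ℕ} {f : V → ℝ} {u w : V}
    (hsupp : ∀ v, f v ≠ 0 → v = u ∨ v = w) {v : V} (hv : stepf G k f v ≠ 0) :
    v ∉ Dset G k ∧ (v = u ∨ v = w ∨ (u ∈ Dset G k ∧ v = pk G k u) ∨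
      (w ∈ Dset G k ∧ v = pk G k w)) := by
  have hvD : v ∉ Dset G k := fun hc => hv (stepf_zero_of_dset hG hc)
  refine ⟨hvD, ?_⟩
  unfold stepf at hv
  rw [if_neg hvD] at hv
  by_cases hfv : f v = 0
  · rw [hfv, zero_add] at hv
    obtain ⟨x, hx, hfx⟩ := Finset.exists_ne_zero_of_sum_ne_zero hv
    rw [Finset.mem_filter] at hx
    rcases hsupp x hfx with rfl | rfl
    · exact Or.inr (Or.inr (Or.inl ⟨hx.1, hx.2.symm⟩))
    · exact Or.inr (Or.inr (Or.inr ⟨hx.1, hx.2.symm⟩))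
  · rcases hsupp v hfv with rfl | rfl
    · exact Or.inl rfl
    · exact Or.inr (Or.inl rfl)

open scoped Classical in
lemma stepf_edge (hG : G.IsTree) {k : ℕ} {f : V → ℝ}
    (hf : EdgeSupp G (Vset G k) f) :
    ∃ u w, u ∈ Vset G k ∧ w ∈ Vset G k ∧ (u = w ∨ G.Adj u w) ∧
      (∀ v, f v ≠ 0 → v = u ∨ v = w) ∧ (∀ v, stepf G k f v ≠ 0 → v = u ∨ v = w) ∧
      EdgeSupp G (Vset G (k+1)) (stepf G k f) := by
  obtain ⟨u, w, huS, hwS, huw, hsupp⟩ := hf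
  by_cases hu : u ∈ Dset G k <;> by_cases hw : w ∈ Dset G k
  · -- both in Dset
    rcases huw with rfl | hadj
    · -- single dying vertex
      refine ⟨u, pk G k u, huS, pk_mem_vset hG hu, Or.inr (pk_adj hG hu),
        fun v hv => Or.inl ((hsupp v hv).elim id id), fun v hv => ?_, ?_⟩
      · obtain ⟨hvD, hcase⟩ := stepf_supp hG hsupp hv
        rcases hcase with rfl | rfl | ⟨_, rfl⟩ | ⟨_, rfl⟩ <;>
          first
            | exact absurd hu hvD
            | exact Or.inr rfl
      · refine ⟨pk G k u, pk G k u, pk_mem_next hG hu, pk_mem_next hG hu, Or.inl rfl,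
          fun v hv => ?_⟩
        obtain ⟨hvD, hcase⟩ := stepf_supp hG hsupp hv
        rcases hcase with rfl | rfl | ⟨_, rfl⟩ | ⟨_, rfl⟩ <;>
          first
            | exact absurd hu hvD
            | exact Or.inl rfl
    · exfalso
      obtain ⟨h3, huS', hdu⟩ := mem_Dset.mp hu
      obtain ⟨_, hwS', hdw⟩ := mem_Dset.mp hw
      exact both_die (vset_good hG k).1 h3 huS' hwS' hadj hdu hdw
  · -- u dies, w survives
    have hadj : G.Adj u w := by
      rcases huw with rfl | h
      · exact absurd hu hw
      · exact h
    have hwn : w ∈ Vset G (k+1) := mem_next_of_not_dset hwS hw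
    have hpku : pk G k u = w := (pk_unique hG hu hwS hadj).symm
    refine ⟨u, w, huS, hwS, huw, hsupp, fun v hv => ?_, ?_⟩
    · obtain ⟨hvD, hcase⟩ := stepf_supp hG hsupp hv
      rcases hcase with rfl | rfl | ⟨_, rfl⟩ | ⟨hwD, rfl⟩
      · exact absurd hu hvD
      · exact Or.inr rfl
      · rw [hpku]; exact Or.inr rfl
      · exact absurd hwD hw
    · refine ⟨w, w, hwn, hwn, Or.inl rfl, fun v hv => ?_⟩
      obtain ⟨hvD, hcase⟩ := stepf_supp hG hsupp hv
      rcases hcase with rfl | rfl | ⟨_, rfl⟩ | ⟨hwD, rfl⟩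
      · exact absurd hu hvD
      · exact Or.inl rfl
      · rw [hpku]; exact Or.inl rfl
      · exact absurd hwD hw
  · -- w dies, u survives
    have hadj : G.Adj u w := by
      rcases huw with rfl | h
      · exact absurd hw hu
      · exact h
    have hun : u ∈ Vset G (k+1) := mem_next_of_not_dset huS hu
    have hpkw : pk G k w = u := (pk_unique hG hw huS hadj.symm).symm
    refine ⟨u, w, huS, hwS, huw, hsupp, fun v hv => ?_, ?_⟩
    · obtain ⟨hvD, hcase⟩ := stepf_supp hG hsupp hv
      rcases hcase with rfl | rfl | ⟨huD, rfl⟩ | ⟨_, rfl⟩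
      · exact Or.inl rfl
      · exact absurd hw hvD
      · exact absurd huD hu
      · rw [hpkw]; exact Or.inl rfl
    · refine ⟨u, u, hun, hun, Or.inl rfl, fun v hv => ?_⟩
      obtain ⟨hvD, hcase⟩ := stepf_supp hG hsupp hv
      rcases hcase with rfl | rfl | ⟨huD, rfl⟩ | ⟨_, rfl⟩
      · exact Or.inl rfl
      · exact absurd hw hvD
      · exact absurd huD hu
      · rw [hpkw]; exact Or.inl rfl
  · -- both survive
    have hun : u ∈ Vset G (k+1) := mem_next_of_not_dset huS hu
    have hwn : w ∈ Vset G (k+1) := mem_next_of_not_dset hwS hw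
    have hsupp' : ∀ v, stepf G k f v ≠ 0 → v = u ∨ v = w := by
      intro v hv
      obtain ⟨hvD, hcase⟩ := stepf_supp hG hsupp hv
      rcases hcase with rfl | rfl | ⟨huD, rfl⟩ | ⟨hwD, rfl⟩
      · exact Or.inl rfl
      · exact Or.inr rfl
      · exact absurd huD hu
      · exact absurd hwD hw
    exact ⟨u, w, huS, hwS, huw, hsupp, hsupp', u, w, hun, hwn, huw, hsupp'⟩

lemma stepf_continuous (k : ℕ) : Continuous (stepf G k) := by
  classical
  refine continuous_pi fun v => ?_
  refine Continuous.add ?_ (continuous_finset_sum _ fun u _ => continuous_apply u)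
  by_cases h : v ∈ Dset G k
  · simpa [stepf, h] using continuous_const
  · simpa [stepf, h] using continuous_apply v

end StepPart

section CollapsePart
variable {V : Type} [Fintype V] {G : SimpleGraph V}

lemma collapse_nonneg {k : ℕ} {f : V → ℝ} (hf : ∀ v, 0 ≤ f v) (v : V) :
    0 ≤ collapse G k f v := by
  induction k generalizing v with
  | zero => exact hf v
  | succ k ih => exact stepf_nonneg ih v

lemma collapse_sum {k : ℕ} (f : V → ℝ) : ∑ v, collapse G k f v = ∑ v, f v := by
  induction k with
  | zero => rfl
  | succ k ih => rw [collapse, stepf_sum, ih]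

lemma collapse_inv {Γ : Type} [Group Γ] {φ : Γ →* Equiv.Perm V} (hG : G.IsTree)
    (hφ : ∀ (γ : Γ) (u w : V), G.Adj u w → G.Adj (φ γ u) (φ γ w))
    {k : ℕ} {f : V → ℝ} (hf : ∀ γ v, f (φ γ v) = f v) :
    ∀ (γ : Γ) (v : V), collapse G k f (φ γ v) = collapse G k f v := by
  induction k with
  | zero => exact hf
  | succ k ih => exact stepf_inv hG hφ ih

lemma collapse_edge (hG : G.IsTree) {k : ℕ} {f : V → ℝ}
    (hf : EdgeSupp G (Vset G 0) f) : EdgeSupp G (Vset G k) (collapse G k f) := by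
  induction k with
  | zero => exact hf
  | succ k ih =>
    obtain ⟨u, w, _, _, _, _, _, h⟩ := stepf_edge hG ih
    exact h

lemma collapse_continuous (k : ℕ) : Continuous (collapse G k) := by
  induction k with
  | zero => exact continuous_id
  | succ k ih => exact (stepf_continuous k).comp ih

end CollapsePart

section CenterPart
variable {V : Type} [Fintype V] {G : SimpleGraph V}

open scoped Classical in
lemma cen_pair (hG : G.IsTree) :
    ∃ a b, (a = b ∨ G.Adj a b) ∧ a ∈ Vset G (Fintype.card V) ∧ b ∈ Vset G (Fintype.card V) ∧
      ∀ v ∈ Vset G (Fintype.card V), v = a ∨ v = b := by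
  set S := Vset G (Fintype.card V) with hS
  have hcard : S.card ≤ 2 := vset_center hG
  have hne : S.Nonempty := (vset_good hG (Fintype.card V)).2
  have hconn : TConn G S := (vset_good hG (Fintype.card V)).1
  interval_cases h : S.card
  · exact absurd (Finset.card_eq_zero.mp h) (Finset.nonempty_iff_ne_empty.mp hne)
  · obtain ⟨a, ha⟩ := Finset.card_eq_one.mp h
    refine ⟨a, a, Or.inl rfl, by simp [ha], by simp [ha], fun v hv => ?_⟩
    rw [ha, Finset.mem_singleton] at hv
    exact Or.inl hv
  · obtain ⟨a, b, hab, hS2⟩ := Finset.card_eq_two.mp h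
    have haS : a ∈ S := by simp [hS2]
    have hbS : b ∈ S := by simp [hS2]
    have hadj : G.Adj a b := by
      have h1 : 1 ≤ tdeg G S a := tdeg_pos hconn (by omega) haS
      have : (S.filter (fun w => G.Adj a w)).Nonempty := by
        rw [← Finset.card_pos]; exact h1
      obtain ⟨z, hz⟩ := this
      rw [Finset.mem_filter] at hz
      have hzS := hz.1
      rw [hS2, Finset.mem_insert, Finset.mem_singleton] at hzS
      rcases hzS with rfl | rfl
      · exact absurd hz.2 (G.irrefl)
      · exact hz.2
    refine ⟨a, b, Or.inr hadj, haS, hbS, fun v hv => ?_⟩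
    rw [hS2, Finset.mem_insert, Finset.mem_singleton] at hv
    exact hv

open scoped Classical in
noncomputable def x0fun (G : SimpleGraph V) : V → ℝ := fun v =>
  if v ∈ Vset G (Fintype.card V) then ((Vset G (Fintype.card V)).card : ℝ)⁻¹ else 0

open scoped Classical in
lemma x0fun_nonneg (v : V) : 0 ≤ x0fun G v := by
  unfold x0fun
  split_ifs
  · positivity
  · exact le_refl 0

open scoped Classical in
lemma x0fun_sum (hG : G.IsTree) : ∑ v, x0fun G v = 1 := by
  unfold x0fun
  rw [Finset.sum_ite_mem, Finset.univ_inter, Finset.sum_const, nsmul_eq_mul]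
  have hne : (Vset G (Fintype.card V)).Nonempty := (vset_good hG (Fintype.card V)).2
  have : ((Vset G (Fintype.card V)).card : ℝ) ≠ 0 := by
    simp [Finset.card_ne_zero_of_mem hne.choose_spec]
  field_simp

open scoped Classical in
lemma x0fun_supp {v : V} (hv : x0fun G v ≠ 0) : v ∈ Vset G (Fintype.card V) := by
  by_contra h
  rw [x0fun] at hv
  exact hv (if_neg h)

open scoped Classical in
lemma x0fun_inv {Γ : Type} [Group Γ] {φ : Γ →* Equiv.Perm V}
    (hφ : ∀ (γ : Γ) (u w : V), G.Adj u w → G.Adj (φ γ u) (φ γ w))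
    (γ : Γ) (v : V) : x0fun G (φ γ v) = x0fun G v := by
  unfold x0fun
  rcases Classical.em (v ∈ Vset G (Fintype.card V)) with h | h
  · rw [if_pos h, if_pos ((vset_inv hφ _ γ v).mpr h)]
  · rw [if_neg h, if_neg (fun hc => h ((vset_inv hφ _ γ v).mp hc))]

end CenterPart

section TopPart
variable {V : Type} [Fintype V] {G : SimpleGraph V} {Γ : Type} [Group Γ]
  {φ : Γ →* Equiv.Perm V}

/-- The fixed-point space. -/
abbrev FixT (G : SimpleGraph V) (φ : Γ →* Equiv.Perm V) : Type :=
  {x : GraphRealization G // ∀ (γ : Γ) (v : V), x.1 (φ γ v) = x.1 v}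

/-- the underlying function of a fixed point -/
def fval (x : FixT G φ) : V → ℝ := x.1.1

lemma fval_continuous : Continuous (fval (G := G) (φ := φ)) :=
  continuous_subtype_val.comp continuous_subtype_val

lemma fval_nonneg (x : FixT G φ) (v : V) : 0 ≤ fval x v := x.1.2.1 v

lemma fval_sum (x : FixT G φ) : ∑ v, fval x v = 1 := x.1.2.2.1

lemma fval_inv (x : FixT G φ) (γ : Γ) (v : V) : fval x (φ γ v) = fval x v := x.2 γ v

lemma fval_edge (x : FixT G φ) : EdgeSupp G (Vset G 0) (fval x) := by
  obtain ⟨u, w, huw, hs⟩ := x.1.2.2.2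
  refine ⟨u, w, Finset.mem_univ u, Finset.mem_univ w, huw, fun v hv => ?_⟩
  have := hs hv
  simpa using this

/-- build a fixed point -/
def mkF (f : V → ℝ) (h0 : ∀ v, 0 ≤ f v) (h1 : ∑ v, f v = 1)
    (he : ∃ u w : V, (u = w ∨ G.Adj u w) ∧ ∀ v, f v ≠ 0 → v = u ∨ v = w)
    (hi : ∀ (γ : Γ) (v : V), f (φ γ v) = f v) : FixT G φ :=
  ⟨⟨f, h0, h1, by
    obtain ⟨u, w, huw, hs⟩ := he
    exact ⟨u, w, huw, fun v hv => by rcases hs v hv with rfl | rfl <;> simp⟩⟩, hi⟩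

@[simp] lemma fval_mkF (f : V → ℝ) (h0 : ∀ v, 0 ≤ f v) (h1 : ∑ v, f v = 1)
    (he : ∃ u w : V, (u = w ∨ G.Adj u w) ∧ ∀ v, f v ≠ 0 → v = u ∨ v = w)
    (hi : ∀ (γ : Γ) (v : V), f (φ γ v) = f v) : fval (mkF f h0 h1 he hi) = f := rfl

lemma mkF_ext {x y : FixT G φ} (h : fval x = fval y) : x = y :=
  Subtype.ext (Subtype.ext h)

variable (φ)

/-- the collapse maps as continuous self-maps of the fixed space -/
noncomputable def cmapF (hG : G.IsTree)
    (hφ : ∀ (γ : Γ) (u w : V), G.Adj u w → G.Adj (φ γ u) (φ γ w)) (k : ℕ) :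
    C(FixT G φ, FixT G φ) where
  toFun x := mkF (collapse G k (fval x))
    (collapse_nonneg (fval_nonneg x))
    (by rw [collapse_sum]; exact fval_sum x)
    (by
      obtain ⟨u, w, _, _, huw, hs⟩ := collapse_edge hG (k := k) (fval_edge x)
      exact ⟨u, w, huw, hs⟩)
    (collapse_inv hG hφ (fval_inv x))
  continuous_toFun := by
    apply Continuous.subtype_mk
    apply Continuous.subtype_mk
    exact (collapse_continuous k).comp fval_continuous

@[simp] lemma fval_cmapF (hG : G.IsTree)
    (hφ : ∀ (γ : Γ) (u w : V), G.Adj u w → G.Adj (φ γ u) (φ γ w)) (k : ℕ) (x : FixT G φ) :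
    fval (cmapF φ hG hφ k x) = collapse G k (fval x) := rfl

end TopPart

section HomotopyPart
variable {V : Type} [Fintype V] {G : SimpleGraph V} {Γ : Type} [Group Γ]
  (φ : Γ →* Equiv.Perm V)

/-- the homotopy between consecutive collapse maps -/
noncomputable def stageH (hG : G.IsTree)
    (hφ : ∀ (γ : Γ) (u w : V), G.Adj u w → G.Adj (φ γ u) (φ γ w)) (k : ℕ) :
    (cmapF φ hG hφ k).Homotopy (cmapF φ hG hφ (k+1)) where
  toFun := fun p => mkF
      (fun v => (1 - (p.1 : ℝ)) * collapse G k (fval p.2) v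
        + (p.1 : ℝ) * collapse G (k+1) (fval p.2) v)
      (fun v => add_nonneg
        (mul_nonneg (by simpa using p.1.2.2) (collapse_nonneg (fval_nonneg p.2) v))
        (mul_nonneg p.1.2.1 (collapse_nonneg (fval_nonneg p.2) v)))
      (by
        rw [Finset.sum_add_distrib, ← Finset.mul_sum, ← Finset.mul_sum,
          collapse_sum, collapse_sum, fval_sum]
        ring)
      (by
        obtain ⟨u, w, _, _, huw, h1, h2, _⟩ :=
          stepf_edge hG (collapse_edge hG (k := k) (fval_edge p.2))
        refine ⟨u, w, huw, fun v hv => ?_⟩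
        beta_reduce at hv
        by_cases hg : collapse G k (fval p.2) v = 0
        · by_cases hg' : collapse G (k+1) (fval p.2) v = 0
          · exact absurd (by beta_reduce; rw [hg, hg']; ring) hv
          · exact h2 v hg'
        · exact h1 v hg)
      (fun γ v => by
        beta_reduce
        rw [collapse_inv hG hφ (fval_inv p.2) γ v,
          collapse_inv (k := k+1) hG hφ (fval_inv p.2) γ v])
  continuous_toFun := by
      apply Continuous.subtype_mk
      apply Continuous.subtype_mk
      refine continuous_pi fun v => ?_
      have tcont : Continuous fun p : unitInterval × FixT G φ => (p.1 : ℝ) :=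
        continuous_subtype_val.comp continuous_fst
      have ccont : ∀ m : ℕ, Continuous fun p : unitInterval × FixT G φ =>
          collapse G m (fval p.2) v := fun m =>
        (continuous_apply v).comp ((collapse_continuous m).comp
          (fval_continuous.comp continuous_snd))
      exact ((continuous_const.sub tcont).mul (ccont k)).add (tcont.mul (ccont (k+1)))
  map_zero_left x := by
    apply mkF_ext
    funext v
    show (1 - ((0 : unitInterval) : ℝ)) * _ + ((0 : unitInterval) : ℝ) * _ = _
    rw [fval_cmapF]
    norm_num
  map_one_left x := by
    apply mkF_ext
    funext v
    show (1 - ((1 : unitInterval) : ℝ)) * _ + ((1 : unitInterval) : ℝ) * _ = _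
    rw [fval_cmapF]
    norm_num

/-- the homotopy from the identity to the `k`-th collapse map -/
noncomputable def chainH (hG : G.IsTree)
    (hφ : ∀ (γ : Γ) (u w : V), G.Adj u w → G.Adj (φ γ u) (φ γ w)) :
    (k : ℕ) → (ContinuousMap.id (FixT G φ)).Homotopy (cmapF φ hG hφ k)
  | 0 => (ContinuousMap.Homotopy.refl (ContinuousMap.id (FixT G φ))).cast rfl
      (by refine ContinuousMap.ext fun x => ?_; exact (mkF_ext (x := cmapF φ hG hφ 0 x) (y := x) rfl).symm)
  | k+1 => (chainH hG hφ k).trans (stageH φ hG hφ k)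

/-- the canonical fixed point: uniform measure on the center -/
noncomputable def x0F (hG : G.IsTree)
    (hφ : ∀ (γ : Γ) (u w : V), G.Adj u w → G.Adj (φ γ u) (φ γ w)) : FixT G φ :=
  mkF (x0fun G) x0fun_nonneg (x0fun_sum hG)
    (by
      obtain ⟨a, b, hab, _, _, hcen⟩ := cen_pair hG
      exact ⟨a, b, hab, fun v hv => hcen v (x0fun_supp hv)⟩)
    (x0fun_inv hφ)

/-- the final homotopy from the full collapse to the constant map -/
noncomputable def endH (hG : G.IsTree)
    (hφ : ∀ (γ : Γ) (u w : V), G.Adj u w → G.Adj (φ γ u) (φ γ w)) :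
    (cmapF φ hG hφ (Fintype.card V)).Homotopy
      (ContinuousMap.const (FixT G φ) (x0F φ hG hφ)) where
  toFun := fun p => mkF
      (fun v => (1 - (p.1 : ℝ)) * collapse G (Fintype.card V) (fval p.2) v
        + (p.1 : ℝ) * x0fun G v)
      (fun v => add_nonneg
        (mul_nonneg (by simpa using p.1.2.2) (collapse_nonneg (fval_nonneg p.2) v))
        (mul_nonneg p.1.2.1 (x0fun_nonneg v)))
      (by
        rw [Finset.sum_add_distrib, ← Finset.mul_sum, ← Finset.mul_sum,
          collapse_sum, fval_sum, x0fun_sum hG]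
        ring)
      (by
        obtain ⟨a, b, hab, _, _, hcen⟩ := cen_pair hG
        obtain ⟨u, w, huS, hwS, _, hs⟩ :=
          collapse_edge hG (k := Fintype.card V) (fval_edge p.2)
        refine ⟨a, b, hab, fun v hv => ?_⟩
        beta_reduce at hv
        by_cases hg : collapse G (Fintype.card V) (fval p.2) v = 0
        · by_cases hg' : x0fun G v = 0
          · exact absurd (by beta_reduce; rw [hg, hg']; ring) hv
          · exact hcen v (x0fun_supp hg')
        · rcases hs v hg with rfl | rfl
          · exact hcen v huS
          · exact hcen v hwS)
      (fun γ v => by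
        beta_reduce
        rw [collapse_inv hG hφ (fval_inv p.2) γ v, x0fun_inv hφ γ v])
  continuous_toFun := by
      apply Continuous.subtype_mk
      apply Continuous.subtype_mk
      refine continuous_pi fun v => ?_
      have tcont : Continuous fun p : unitInterval × FixT G φ => (p.1 : ℝ) :=
        continuous_subtype_val.comp continuous_fst
      have ccont : Continuous fun p : unitInterval × FixT G φ =>
          collapse G (Fintype.card V) (fval p.2) v :=
        (continuous_apply v).comp ((collapse_continuous _).comp
          (fval_continuous.comp continuous_snd))
      exact ((continuous_const.sub tcont).mul ccont).add (tcont.mul continuous_const)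
  map_zero_left x := by
    apply mkF_ext
    funext v
    show (1 - ((0 : unitInterval) : ℝ)) * _ + ((0 : unitInterval) : ℝ) * _ = _
    rw [fval_cmapF]
    norm_num
  map_one_left x := by
    apply mkF_ext
    funext v
    show (1 - ((1 : unitInterval) : ℝ)) * _ + ((1 : unitInterval) : ℝ) * _ = _
    norm_num
    rfl

end HomotopyPart

end TreeFix

/-- if a finite group acts by simplicial automorphisms on a finite tree,
then the fixed-point set of the geometric realization is nonempty and contractible. -/
theorem fixedPoints_of_tree_action {V : Type} [Fintype V] (G : SimpleGraph V)
    (hG : G.IsTree) (Γ : Type) [Group Γ] [Finite Γ]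
    (φ : Γ →* Equiv.Perm V)
    (hφ : ∀ (γ : Γ) (u w : V), G.Adj u w → G.Adj (φ γ u) (φ γ w)) :
    Nonempty {x : GraphRealization G // ∀ (γ : Γ) (v : V), x.1 (φ γ v) = x.1 v} ∧
    ContractibleSpace {x : GraphRealization G // ∀ (γ : Γ) (v : V), x.1 (φ γ v) = x.1 v} := by
  constructor
  · exact ⟨TreeFix.x0F φ hG hφ⟩
  · rw [contractible_iff_id_nullhomotopic]
    exact ⟨TreeFix.x0F φ hG hφ,
      ⟨(TreeFix.chainH φ hG hφ (Fintype.card V)).trans (TreeFix.endH φ hG hφ)⟩⟩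
end
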